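/- arXiv:1907.00964 — 9 statements merged into one kernel-verified Lean document; each statement's English description precedes it below -/
import Mathlib

section
/- For each integer t ≥ 3, there exists a constant C = C(t) > 0 such that every two-colouring (red/blue) of the edges of the complete graph K_n on n ≥ C vertices in which each colour appears on at least C·n^{-1/t}·n² = C·n^{2-1/t} edges contains an unavoidable t-colouring. -/
/-- A two-coloured complete graph (red graph `R`, blue graph `Rᶜ`) contains an
unavoidable `t`-colouring: there are disjoint `t`-sets `X`, `Y` such that one of
the colours `G ∈ {R, Rᶜ}` forms either the clique on `X` alone, or the two disjoint
cliques on `X` and on `Y`, with all remaining edges among `X ∪ Y` of the other colour. -/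
def ContainsUnavoidable {V : Type*} (R : SimpleGraph V) (t : ℕ) : Prop :=
  ∃ X Y : Finset V, Disjoint X Y ∧ X.card = t ∧ Y.card = t ∧
    ∃ G : SimpleGraph V, (G = R ∨ G = Rᶜ) ∧
      G.IsClique (X : Set V) ∧
      (G.IsClique (Y : Set V) ∨ Gᶜ.IsClique (Y : Set V)) ∧
      ∀ x ∈ X, ∀ y ∈ Y, Gᶜ.Adj x y

/-!
By Ramsey's theorem `K_n` contains a large monochromatic clique `S`; let `G` be the other colour,
so that `S` is independent in `G` while `G` has at least `C n^{2-1/t}` edges. Dependent random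
choice (a first-moment count over `t`-tuples of vertices) then yields a set `U` of size at least
`R(2t, t)` all of whose `t`-subsets have at least `R(t, t)` common `G`-neighbours. Ramsey inside
`U` gives either an independent `t`-set `B`, completed to the pattern by a monochromatic `t`-set
in the common neighbourhood of `B`, or a `G`-clique `A` of size `2t`. In the latter case every
vertex of `S \ A` is joined to all, or to none, of some `t`-subset of `A`, and the pigeonhole
principle gives `t` vertices of `S` making the same choice.
-/

open Finset Fintype

namespace Finset

theorem exists_subset_forall_not_subset_of_card_add_le {α : Type*} [DecidableEq α]
    {s : Finset α} {𝓑 : Finset (Finset α)} {u : ℕ} (h𝓑 : ∀ T ∈ 𝓑, T.Nonempty)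
    (h : #𝓑 + u ≤ #s) : ∃ U ⊆ s, u ≤ #U ∧ ∀ T ∈ 𝓑, ¬T ⊆ U := by
  choose p hp using h𝓑
  refine ⟨s \ 𝓑.attach.image fun T ↦ p T.1 T.2, sdiff_subset, ?_, fun T hT hTU ↦ ?_⟩
  · have := card_image_le (s := 𝓑.attach) (f := fun T ↦ p T.1 T.2)
    have := le_card_sdiff (𝓑.attach.image fun T ↦ p T.1 T.2) s
    rw [card_attach] at *
    omega
  · exact (mem_sdiff.1 (hTU (hp T hT))).2 (mem_image.2 ⟨⟨T, hT⟩, mem_attach _ _, rfl⟩)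

end Finset

theorem pow_mul_pow_le_pow_of_mul_rpow_le {c n e t : ℕ} (ht : 0 < t)
    (h : (c : ℝ) * n ^ (2 - 1 / t : ℝ) ≤ e) : c ^ t * n ^ (2 * t - 1) ≤ e ^ t := by
  have hexp : ((n : ℝ) ^ (2 - 1 / t : ℝ)) ^ t = (n : ℝ) ^ (2 * t - 1) := by
    rw [← Real.rpow_natCast, ← Real.rpow_mul (Nat.cast_nonneg n), ← Real.rpow_natCast]
    congr 1
    rw [Nat.cast_sub (by omega)]
    push_cast
    field_simp
  have := pow_le_pow_left₀ (by positivity) h t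
  rw [mul_pow, hexp] at this
  exact_mod_cast this

theorem containsUnavoidable_compl {V : Type*} {G : SimpleGraph V} {t : ℕ} :
    ContainsUnavoidable Gᶜ t ↔ ContainsUnavoidable G t := by
  suffices ∀ H : SimpleGraph V, ContainsUnavoidable H t → ContainsUnavoidable Hᶜ t from
    ⟨fun h ↦ compl_compl G ▸ this _ h, this G⟩
  rintro H ⟨X, Y, hXY, hX, hY, K, hK, hKX, hKY, hcross⟩
  refine ⟨X, Y, hXY, hX, hY, K, ?_, hKX, hKY, hcross⟩
  rw [compl_compl]
  exact hK.symm

theorem ContainsUnavoidable.of_isNClique {V : Type*} {G : SimpleGraph V} {t : ℕ} {X Y : Finset V}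
    (hX : G.IsNClique t X) (hY : G.IsNClique t Y ∨ Gᶜ.IsNClique t Y)
    (hXY : ∀ x ∈ X, ∀ y ∈ Y, Gᶜ.Adj x y) : ContainsUnavoidable G t := by
  refine ⟨X, Y, disjoint_left.2 fun x hx hxY ↦ (hXY x hx x hxY).ne rfl, hX.card_eq,
    hY.elim (·.card_eq) (·.card_eq), G, .inl rfl, hX.isClique, ?_, hXY⟩
  exact hY.imp (·.isClique) (·.isClique)

namespace SimpleGraph

variable {V : Type*} {G : SimpleGraph V} {t : ℕ}

theorem exists_isNClique_insert {W N : Finset V} {x : V} {a : ℕ} (hx : x ∈ W) (hN : N ⊆ W)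
    (hxN : ∀ y ∈ N, G.Adj x y) :
    (∃ A ⊆ N, G.IsNClique a A) → ∃ A ⊆ W, G.IsNClique (a + 1) A := by
  classical
  rintro ⟨A, hAN, hA⟩
  exact ⟨insert x A, insert_subset hx (hAN.trans hN), hA.insert fun y hy ↦ hxN y (hAN hy)⟩

theorem exists_isNClique_or_isNClique_compl (G : SimpleGraph V) :
    ∀ {a b : ℕ} {W : Finset V}, (a + b).choose a ≤ #W →
      (∃ A ⊆ W, G.IsNClique a A) ∨ ∃ B ⊆ W, Gᶜ.IsNClique b B := by
  classical
  intro a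
  induction a with
  | zero => exact fun _ ↦ .inl ⟨∅, empty_subset _, by simp⟩
  | succ a iha =>
    intro b
    induction b with
    | zero => exact fun _ ↦ .inr ⟨∅, empty_subset _, by simp⟩
    | succ b ihb =>
      intro W hW
      have hpascal : (a + 1 + (b + 1)).choose (a + 1) =
          (a + (b + 1)).choose a + (a + 1 + b).choose (a + 1) := by
        rw [show a + (b + 1) = a + b + 1 by omega, show a + 1 + b = a + b + 1 by omega,
          show a + 1 + (b + 1) = a + b + 1 + 1 by omega, Nat.choose_succ_succ]
      obtain ⟨x, hx⟩ := card_pos.1 (lt_of_lt_of_le (Nat.choose_pos (by omega)) hW)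
      set Nb := (W.erase x).filter (G.Adj x)
      set Nc := (W.erase x).filter (¬G.Adj x ·)
      have hsplit : #Nb + #Nc + 1 = #W := by
        rw [card_filter_add_card_filter_not, card_erase_add_one hx]
      have hNb : Nb ⊆ W := (filter_subset _ _).trans (erase_subset _ _)
      have hNc : Nc ⊆ W := (filter_subset _ _).trans (erase_subset _ _)
      by_cases hb : (a + (b + 1)).choose a ≤ #Nb
      · refine (iha hb).imp (exists_isNClique_insert hx hNb fun y hy ↦ (mem_filter.1 hy).2) ?_
        exact fun ⟨B, hB, hBc⟩ ↦ ⟨B, hB.trans hNb, hBc⟩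
      · refine (ihb (W := Nc) (by omega)).imp
          (fun ⟨A, hA, hAc⟩ ↦ ⟨A, hA.trans hNc, hAc⟩) ?_
        refine exists_isNClique_insert hx hNc fun y hy ↦ ?_
        obtain ⟨hyW, hxy⟩ := mem_filter.1 hy
        exact (compl_adj G x y).2 ⟨(ne_of_mem_erase hyW).symm, hxy⟩

section Finite

variable [Fintype V] (G) [DecidableRel G.Adj]

variable {G} in
theorem mul_pow_le_sum_degree_pow (ht : 0 < t) {c : ℕ}
    (h : (c : ℝ) * card V ^ (2 - 1 / t : ℝ) ≤ G.edgeSet.ncard) :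
    c * card V ^ t ≤ ∑ v, G.degree v ^ t := by
  rw [← coe_edgeFinset, Set.ncard_coe_finset] at h
  set n := card V
  rcases Nat.eq_zero_or_pos n with hn | hn
  · simp [hn, ht.ne']
  have hjensen : (∑ v, G.degree v) ^ t ≤ n ^ (t - 1) * ∑ v, G.degree v ^ t := by
    obtain ⟨k, rfl⟩ : ∃ k, t = k + 1 := ⟨t - 1, by omega⟩
    simpa using pow_sum_le_card_mul_sum_pow (s := univ) (f := fun v ↦ G.degree v)
      (fun _ _ ↦ Nat.zero_le _) k
  refine Nat.le_of_mul_le_mul_right ?_ (pow_pos hn (t - 1))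
  calc c * n ^ t * n ^ (t - 1) = c * n ^ (2 * t - 1) := by
        rw [mul_assoc, ← pow_add]; congr 2; omega
    _ ≤ c ^ t * n ^ (2 * t - 1) := Nat.mul_le_mul_right _ (Nat.le_self_pow ht.ne' c)
    _ ≤ #G.edgeFinset ^ t := pow_mul_pow_le_pow_of_mul_rpow_le ht h
    _ ≤ (2 * #G.edgeFinset) ^ t := Nat.pow_le_pow_left (by omega) t
    _ = (∑ v, G.degree v) ^ t := by rw [sum_degrees_eq_twice_card_edges]
    _ ≤ _ := by rw [mul_comm]; exact hjensen

def commonNeighborFinset (T : Finset V) : Finset V := {v | ∀ x ∈ T, G.Adj x v}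

variable {G} in
@[simp]
theorem mem_commonNeighborFinset {T : Finset V} {v : V} :
    v ∈ G.commonNeighborFinset T ↔ ∀ x ∈ T, G.Adj x v := by
  simp [commonNeighborFinset]

def lowCodegreeSets (t M : ℕ) : Finset (Finset V) :=
  {T ∈ univ.powersetCard t | #(G.commonNeighborFinset T) < M}

variable {G} in
@[simp]
theorem mem_lowCodegreeSets {T : Finset V} {M : ℕ} :
    T ∈ G.lowCodegreeSets t M ↔ #T = t ∧ #(G.commonNeighborFinset T) < M := by
  simp [lowCodegreeSets]

variable [DecidableEq V]

theorem sum_card_commonNeighborFinset_image_eq_sum_degree_pow :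
    ∑ f : Fin t → V, #(G.commonNeighborFinset (univ.image f)) = ∑ v, G.degree v ^ t := by
  have hdc := sum_card_bipartiteAbove_eq_sum_card_bipartiteBelow (s := univ) (t := univ)
    (r := fun (f : Fin t → V) v ↦ ∀ i, G.Adj (f i) v)
  convert hdc using 3 with f _ v
  · ext v
    simp [bipartiteAbove]
  · rw [← card_neighborFinset_eq_degree, ← card_piFinset_const]
    congr 1
    ext f
    simp [bipartiteBelow, adj_comm]

theorem sum_card_filter_lowCodegreeSets_le (M : ℕ) :
    ∑ f : Fin t → V,
      #{T ∈ G.lowCodegreeSets t M | T ⊆ G.commonNeighborFinset (univ.image f)} ≤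
        M ^ t * card V ^ t := by
  have hcount : ∀ T ∈ G.lowCodegreeSets t M,
      #{f : Fin t → V | T ⊆ G.commonNeighborFinset (univ.image f)} =
        #(G.commonNeighborFinset T) ^ t := by
    intro T _
    rw [← card_piFinset_const]
    congr 1
    ext f
    simp only [mem_filter, mem_univ, true_and, subset_iff, mem_piFinset,
      mem_commonNeighborFinset, mem_image, forall_exists_index, forall_apply_eq_imp_iff]
    exact ⟨fun h i x hx ↦ (h hx i).symm, fun h x hx i ↦ (h i x hx).symm⟩
  calc _ = ∑ T ∈ G.lowCodegreeSets t M, #(G.commonNeighborFinset T) ^ t := by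
        rw [← sum_congr rfl hcount]
        exact sum_card_bipartiteAbove_eq_sum_card_bipartiteBelow _
    _ ≤ ∑ _T ∈ G.lowCodegreeSets t M, M ^ t := sum_le_sum fun T hT ↦
        Nat.pow_le_pow_left (mem_lowCodegreeSets.1 hT).2.le t
    _ ≤ #((univ : Finset V).powersetCard t) * M ^ t := by
        rw [sum_const, smul_eq_mul]
        exact Nat.mul_le_mul_right _ (card_le_card (filter_subset _ _))
    _ ≤ M ^ t * card V ^ t := by
        rw [card_powersetCard, card_univ, mul_comm]
        exact Nat.mul_le_mul_left _ (Nat.choose_le_pow _ _)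

theorem exists_le_card_commonNeighborFinset [Nonempty V] {M u : ℕ} (ht : 0 < t)
    (h : (u + M ^ t) * card V ^ t ≤ ∑ v, G.degree v ^ t) :
    ∃ U : Finset V, u ≤ #U ∧ ∀ T ⊆ U, #T = t → M ≤ #(G.commonNeighborFinset T) := by
  obtain ⟨f, -, hf⟩ := exists_le_of_sum_le (s := univ) univ_nonempty
    (f := fun f : Fin t → V ↦
      #{T ∈ G.lowCodegreeSets t M | T ⊆ G.commonNeighborFinset (univ.image f)} + u)
    (g := fun f ↦ #(G.commonNeighborFinset (univ.image f))) (by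
      rw [sum_add_distrib, sum_const, card_univ, card_fun, Fintype.card_fin, smul_eq_mul,
        sum_card_commonNeighborFinset_image_eq_sum_degree_pow]
      linarith [G.sum_card_filter_lowCodegreeSets_le (t := t) M])
  obtain ⟨U, hU, hUcard, hUbad⟩ := exists_subset_forall_not_subset_of_card_add_le
    (fun T hT ↦ card_pos.1 <| by rw [(mem_lowCodegreeSets.1 (mem_filter.1 hT).1).1]; exact ht) hf
  refine ⟨U, hUcard, fun T hTU hT ↦ ?_⟩
  by_contra! hlt
  exact hUbad T (mem_filter.2 ⟨mem_lowCodegreeSets.2 ⟨hT, hlt⟩, hTU.trans hU⟩) hTU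

end Finite

theorem exists_subset_card_eq_forall_adj_or_forall_not_adj (v : V) {A : Finset V}
    (hA : 2 * t ≤ #A + 1) :
    ∃ X ⊆ A, #X = t ∧ ((∀ x ∈ X, G.Adj v x) ∨ ∀ x ∈ X, ¬G.Adj v x) := by
  classical
  have hsplit := card_filter_add_card_filter_not (s := A) (G.Adj v)
  by_cases h : t ≤ #(A.filter (G.Adj v))
  · obtain ⟨X, hX, hXc⟩ := exists_subset_card_eq h
    exact ⟨X, hX.trans (filter_subset _ _), hXc, .inl fun x hx ↦ (mem_filter.1 (hX hx)).2⟩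
  · obtain ⟨X, hX, hXc⟩ :=
      exists_subset_card_eq (s := A.filter (¬G.Adj v ·)) (n := t) (by omega)
    exact ⟨X, hX.trans (filter_subset _ _), hXc, .inr fun x hx ↦ (mem_filter.1 (hX hx)).2⟩

theorem containsUnavoidable_of_isNClique_of_isClique_compl {A S : Finset V}
    (hA : G.IsNClique (t + t) A) (hS : Gᶜ.IsClique (S : Set V))
    (hSc : t + t + 2 * (t + t).choose t * t ≤ #S) : ContainsUnavoidable G t := by
  classical
  have hSA : 2 * (t + t).choose t * t ≤ #(S \ A) := by
    have := le_card_sdiff A S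
    rw [hA.card_eq] at this
    omega
  choose X hXA hXc hXuni using fun v ↦
    exists_subset_card_eq_forall_adj_or_forall_not_adj (G := G) (t := t) v (A := A)
      (by rw [hA.card_eq]; omega)
  have hmaps : ∀ v ∈ S \ A,
      (X v, decide (∀ x ∈ X v, G.Adj v x)) ∈ A.powersetCard t ×ˢ (univ : Finset Bool) :=
    fun v _ ↦ mem_product.2 ⟨mem_powersetCard.2 ⟨hXA v, hXc v⟩, mem_univ _⟩
  have hcard : #(A.powersetCard t ×ˢ (univ : Finset Bool)) * t ≤ #(S \ A) := by
    rwa [card_product, card_powersetCard, hA.card_eq, card_univ, Fintype.card_bool, mul_comm _ 2]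
  obtain ⟨⟨X₀, b⟩, hp, hfib⟩ := exists_le_card_fiber_of_mul_le_card_of_maps_to hmaps
    ((powersetCard_nonempty.2 (by rw [hA.card_eq]; omega)).product univ_nonempty) hcard
  obtain ⟨Y, hYfib, hYc⟩ := exists_subset_card_eq hfib
  have hY : ∀ y ∈ Y,
      (y ∈ S ∧ y ∉ A) ∧ X y = X₀ ∧ decide (∀ x ∈ X y, G.Adj y x) = b := by
    intro y hy
    simpa [Prod.ext_iff] using mem_filter.1 (hYfib hy)
  have hX₀A := mem_powersetCard.1 (mem_product.1 hp).1
  have hX₀ : G.IsNClique t X₀ := ⟨hA.isClique.subset (coe_subset.2 hX₀A.1), hX₀A.2⟩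
  have hYind : Gᶜ.IsNClique t Y :=
    ⟨hS.subset (coe_subset.2 fun y hy ↦ (hY y hy).1.1), hYc⟩
  cases b with
  | false =>
    refine .of_isNClique hX₀ (.inr hYind) fun x hx y hy ↦ ?_
    obtain ⟨⟨-, hyA⟩, hXy, hdec⟩ := hY y hy
    have hnonadj := (hXuni y).resolve_left (of_decide_eq_false hdec)
    refine (compl_adj G x y).2 ⟨fun hxy ↦ hyA (hxy ▸ hX₀A.1 hx), fun hadj ↦ ?_⟩
    exact hnonadj x (hXy ▸ hx) hadj.symm
  | true =>
    rw [← containsUnavoidable_compl]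
    refine .of_isNClique hYind (.inr (by rwa [compl_compl])) fun y hy x hx ↦ ?_
    obtain ⟨-, hXy, hdec⟩ := hY y hy
    rw [compl_compl]
    exact of_decide_eq_true hdec x (hXy ▸ hx)

theorem containsUnavoidable_of_isNClique_compl_of_le_card_commonNeighborFinset [Fintype V]
    [DecidableRel G.Adj] {B : Finset V} (hB : Gᶜ.IsNClique t B)
    (hN : (t + t).choose t ≤ #(G.commonNeighborFinset B)) : ContainsUnavoidable G t := by
  rw [← containsUnavoidable_compl]
  have hcross : ∀ x ∈ B, ∀ y ∈ G.commonNeighborFinset B, Gᶜᶜ.Adj x y := by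
    simp_rw [compl_compl, mem_commonNeighborFinset]
    exact fun x hx y hy ↦ hy x hx
  rcases G.exists_isNClique_or_isNClique_compl hN with ⟨Y, hYN, hY⟩ | ⟨Y, hYN, hY⟩
  · exact .of_isNClique hB (.inr (by rwa [compl_compl])) fun x hx y hy ↦ hcross x hx y (hYN hy)
  · exact .of_isNClique hB (.inl hY) fun x hx y hy ↦ hcross x hx y (hYN hy)

theorem containsUnavoidable_of_isClique_compl_of_mul_rpow_le [Fintype V] (ht : 0 < t)
    {S : Finset V} (hS : Gᶜ.IsClique (S : Set V))
    (hSc : t + t + 2 * (t + t).choose t * t ≤ #S) {c : ℕ}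
    (hc : (t + t + t).choose (t + t) + (t + t).choose t ^ t ≤ c)
    (hE : (c : ℝ) * card V ^ (2 - 1 / t : ℝ) ≤ G.edgeSet.ncard) :
    ContainsUnavoidable G t := by
  classical
  have : Nonempty V := (card_pos.1 (by omega : 0 < #S)).to_subtype.map (↑)
  obtain ⟨U, hU, hUN⟩ := G.exists_le_card_commonNeighborFinset ht
    ((Nat.mul_le_mul_right _ hc).trans (mul_pow_le_sum_degree_pow ht hE))
  rcases G.exists_isNClique_or_isNClique_compl hU with ⟨A, -, hA⟩ | ⟨B, hBU, hB⟩
  · exact containsUnavoidable_of_isNClique_of_isClique_compl hA hS hSc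
  · exact containsUnavoidable_of_isNClique_compl_of_le_card_commonNeighborFinset hB
      (hUN B hBU hB.card_eq)

end SimpleGraph

open SimpleGraph

/-- **Theorem (Girão–Narayanan).** For each `t ≥ 3` there is `C = C(t) > 0` such that every
red/blue colouring of `K_n` with `n ≥ C` in which each colour appears on at least
`C·n^{2 - 1/t}` edges contains an unavoidable `t`-colouring. -/
theorem statement0 :
    ∀ t : ℕ, 3 ≤ t →
      ∃ C : ℝ, 0 < C ∧
        ∀ (n : ℕ) (R : SimpleGraph (Fin n)),
          C ≤ (n : ℝ) →
          C * (n : ℝ) ^ ((2 : ℝ) - 1 / (t : ℝ)) ≤ (R.edgeSet.ncard : ℝ) →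
          C * (n : ℝ) ^ ((2 : ℝ) - 1 / (t : ℝ)) ≤ (Rᶜ.edgeSet.ncard : ℝ) →
          ContainsUnavoidable R t := by
  intro t ht
  set s := t + t + 2 * (t + t).choose t * t
  set c := (t + t + t).choose (t + t) + (t + t).choose t ^ t
  refine ⟨((s + s).choose s + c : ℕ), Nat.cast_pos.2 ?_, fun n R hn hR hRc ↦ ?_⟩
  · have := Nat.choose_pos (Nat.le_add_left s s)
    omega
  have hs : (s + s).choose s ≤ #(univ : Finset (Fin n)) := by
    rw [card_univ, Fintype.card_fin]
    exact le_of_add_le_left (by exact_mod_cast hn)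
  rcases R.exists_isNClique_or_isNClique_compl hs with ⟨S, -, hS⟩ | ⟨S, -, hS⟩
  · rw [← containsUnavoidable_compl]
    exact containsUnavoidable_of_isClique_compl_of_mul_rpow_le (by omega)
      (by rw [compl_compl]; exact hS.isClique) hS.card_eq.ge (Nat.le_add_left c _)
      (by rwa [Fintype.card_fin])
  · exact containsUnavoidable_of_isClique_compl_of_mul_rpow_le (by omega) hS.isClique
      hS.card_eq.ge (Nat.le_add_left c _) (by rwa [Fintype.card_fin])
end

section
/- For each integer t ≥ 3 and all sufficiently large n, there exists a two-colouring (red/blue) of the edges of the complete graph K_n that does not contain an unavoidable t-colouring and in which each colour appears on at least (ex(n, K_{t,t}) − 1)/2 edges; that is, the colouring is δ_t-far from being monochromatic with δ_t(n) = (ex(n, K_{t,t}) − 1)/(2n²). -/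
/-- `G` contains a copy of `H` (as a not necessarily induced subgraph). -/
def ContainsCopy {V W : Type*} (G : SimpleGraph V) (H : SimpleGraph W) : Prop :=
  ∃ f : W → V, Function.Injective f ∧ ∀ a b, H.Adj a b → G.Adj (f a) (f b)

/-- The Turán number `ex(n, H)`: the maximum number of edges of an `H`-free
graph on `n` vertices. -/
noncomputable def turanNumber (n : ℕ) {W : Type*} (H : SimpleGraph W) : ℕ :=
  sSup {m | ∃ G : SimpleGraph (Fin n), ¬ ContainsCopy G H ∧ G.edgeSet.ncard = m}

/-! Take a `K_{t,t}`-free graph with `ex(n, K_{t,t})` edges. Averaging over all two-colourings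
of its vertices, some colouring has at least half of the edges between its colour classes;
let the red graph `R` consist of exactly `⌊ex/2⌋` of these edges. `R` is bipartite, so it has
no red clique of order `t ≥ 3`, and it is `K_{t,t}`-free, so no two disjoint `t`-sets are
completely red between each other: this excludes every unavoidable `t`-colouring. Blue gets
the remaining `C(n,2) - ⌊ex/2⌋ ≥ ex - ⌊ex/2⌋` edges. -/

open Finset SimpleGraph

variable {V W : Type*}

lemma containsCopy_iff_isContained {G : SimpleGraph V} {H : SimpleGraph W} :
    ContainsCopy G H ↔ H ⊑ G :=
  ⟨fun ⟨f, hinj, hadj⟩ => ⟨⟨⟨f, hadj _ _⟩, hinj⟩⟩,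
    fun ⟨f⟩ => ⟨f, f.injective, fun _ _ => f.toHom.map_adj⟩⟩

lemma SimpleGraph.ncard_edgeSet_eq_card_edgeFinset (G : SimpleGraph V) [Fintype G.edgeSet] :
    G.edgeSet.ncard = #G.edgeFinset :=
  Set.ncard_eq_toFinset_card' _

lemma turanNumber_eq_extremalNumber (n : ℕ) (H : SimpleGraph W) :
    turanNumber n H = extremalNumber n H := by
  classical
  have hbdd : extremalNumber n H ∈ upperBounds
      {m | ∃ G : SimpleGraph (Fin n), ¬ ContainsCopy G H ∧ G.edgeSet.ncard = m} := by
    rintro _ ⟨G, hG, rfl⟩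
    rw [G.ncard_edgeSet_eq_card_edgeFinset]
    simpa using card_edgeFinset_le_extremalNumber (containsCopy_iff_isContained.not.1 hG)
  refine le_antisymm (csSup_le' hbdd) ?_
  conv_lhs => rw [← Fintype.card_fin n]
  refine (extremalNumber_le_iff H _).2 fun G _ hG => le_csSup ⟨_, hbdd⟩ ⟨G, ?_, ?_⟩
  · exact containsCopy_iff_isContained.not.2 hG
  · convert G.ncard_edgeSet_eq_card_edgeFinset

lemma exists_free_ncard_edgeSet_eq_turanNumber (n : ℕ) {H : SimpleGraph W} (hH : H ≠ ⊥) :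
    ∃ G : SimpleGraph (Fin n), H.Free G ∧ G.edgeSet.ncard = turanNumber n H := by
  obtain ⟨G, _, hG⟩ := exists_isExtremal_free (V := Fin n) hH
  refine ⟨G, hG.prop, ?_⟩
  rw [G.ncard_edgeSet_eq_card_edgeFinset, card_edgeFinset_of_isExtremal_free hG,
    Fintype.card_fin, turanNumber_eq_extremalNumber]

lemma SimpleGraph.ncard_edgeSet_add_ncard_edgeSet_compl [Fintype V] (G : SimpleGraph V) :
    G.edgeSet.ncard + Gᶜ.edgeSet.ncard = (Fintype.card V).choose 2 := by
  classical
  rw [← Set.ncard_union_eq (disjoint_edgeSet.2 disjoint_compl_right), ← edgeSet_sup,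
    sup_compl_eq_top, ncard_edgeSet_eq_card_edgeFinset, card_edgeFinset_top_eq_card_choose_two]

lemma SimpleGraph.exists_le_ncard_edgeSet_eq [Finite V] (G : SimpleGraph V) {k : ℕ}
    (hk : k ≤ G.edgeSet.ncard) : ∃ H ≤ G, H.edgeSet.ncard = k := by
  obtain ⟨s, hs, rfl⟩ := Set.exists_subset_card_eq hk
  refine ⟨G.deleteEdges (G.edgeSet \ s), deleteEdges_le _, ?_⟩
  rw [edgeSet_deleteEdges, Set.sdiff_sdiff_cancel_left hs]

lemma not_containsUnavoidable_of_cliqueFree {t : ℕ} {R : SimpleGraph V}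
    (hclique : R.CliqueFree t) (hfree : (completeBipartiteGraph (Fin t) (Fin t)).Free R) :
    ¬ ContainsUnavoidable R t := by
  rintro ⟨X, Y, -, hX, hY, G, rfl | rfl, hGX, -, hXY⟩
  · exact hclique X ⟨hGX, hX⟩
  · refine hfree (completeBipartiteGraph_isContained_iff.2 ⟨X, Y, ?_, ?_, fun x hx y hy => ?_⟩)
    · simpa using hX
    · simpa using hY
    · simpa using hXY x hx y hy

lemma two_mul_card_filter_ne_eq_card [Fintype V] [DecidableEq V] {a b : V} (hab : a ≠ b) :
    2 * #{c : V → Bool | c a ≠ c b} = Fintype.card (V → Bool) := by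
  -- recolouring `a` swaps the colourings that separate `a` from `b` with those that do not
  have hswap : #{c : V → Bool | c a ≠ c b} = #{c : V → Bool | ¬ c a ≠ c b} := by
    refine card_nbij' (fun c => Function.update c a (!c a)) (fun c => Function.update c a (!c a))
      ?_ ?_ ?_ ?_ <;> intro c hc <;> simp_all [Function.update_of_ne hab.symm, Bool.eq_not]
  have := card_filter_add_card_filter_not (s := univ) (fun c : V → Bool => c a ≠ c b)
  rw [card_univ] at this
  omega

lemma exists_card_le_two_mul_card_filter_not_isDiag_map [Fintype V] [DecidableEq V]
    (F : Finset (Sym2 V)) (hF : ∀ e ∈ F, ¬ e.IsDiag) :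
    ∃ c : V → Bool, #F ≤ 2 * #{e ∈ F | ¬ (e.map c).IsDiag} := by
  have hedge : ∀ e ∈ F,
      2 * #{c : V → Bool | ¬ (e.map c).IsDiag} = Fintype.card (V → Bool) := by
    intro e he
    induction e using Sym2.ind with
    | h a b =>
      simpa [Sym2.map_mk] using two_mul_card_filter_ne_eq_card (by simpa using hF _ he)
  have hsum :
      ∑ c : V → Bool, #F = ∑ c : V → Bool, 2 * #{e ∈ F | ¬ (e.map c).IsDiag} := by
    simp only [card_filter, mul_sum]
    rw [sum_comm, sum_const, card_univ, smul_eq_mul, mul_comm, card_eq_sum_ones, sum_mul]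
    refine sum_congr rfl fun e he => ?_
    rw [one_mul, ← hedge e he, card_filter, mul_sum]
  obtain ⟨c, -, hc⟩ := exists_le_of_sum_le univ_nonempty hsum.le
  exact ⟨c, hc⟩

lemma SimpleGraph.exists_isBipartite_ncard_edgeSet_le_two_mul [Finite V] (G : SimpleGraph V) :
    ∃ B ≤ G, B.IsBipartite ∧ G.edgeSet.ncard ≤ 2 * B.edgeSet.ncard := by
  classical
  have := Fintype.ofFinite V
  obtain ⟨c, hc⟩ := exists_card_le_two_mul_card_filter_not_isDiag_map G.edgeFinset
    fun e he => G.not_isDiag_of_mem_edgeSet (mem_edgeFinset.1 he)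
  refine ⟨G.deleteEdges {e | (e.map c).IsDiag}, deleteEdges_le _,
    by simpa using (Coloring.mk c fun h => by simpa using ((deleteEdges_adj ..).1 h).2).colorable,
    ?_⟩
  have hcut : (G.deleteEdges {e | (e.map c).IsDiag}).edgeSet =
      ↑({e ∈ G.edgeFinset | ¬ (e.map c).IsDiag}) := by
    ext e
    simp
  rwa [G.ncard_edgeSet_eq_card_edgeFinset, hcut, Set.ncard_coe_finset]

lemma sub_one_div_two_le_of_le_two_mul_add_one {m x : ℕ} (h : m ≤ 2 * x + 1) :
    ((m : ℝ) - 1) / 2 ≤ x := by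
  have : (m : ℝ) ≤ 2 * x + 1 := by exact_mod_cast h
  linarith

/-- **Proposition (extremal construction for colourings).** For each `t ≥ 3` and all large
enough `n`, there is a two-colouring of `K_n` with no unavoidable `t`-colouring in which
each colour appears on at least `(ex(n, K_{t,t}) - 1)/2` edges. -/
theorem statement2 :
    ∀ t : ℕ, 3 ≤ t →
      ∃ N : ℕ, ∀ n : ℕ, N ≤ n →
        ∃ R : SimpleGraph (Fin n),
          ¬ ContainsUnavoidable R t ∧
          ((turanNumber n (completeBipartiteGraph (Fin t) (Fin t)) : ℝ) - 1) / 2 ≤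
            (R.edgeSet.ncard : ℝ) ∧
          ((turanNumber n (completeBipartiteGraph (Fin t) (Fin t)) : ℝ) - 1) / 2 ≤
            (Rᶜ.edgeSet.ncard : ℝ) := by
  intro t ht
  refine ⟨0, fun n _ => ?_⟩
  have hK : completeBipartiteGraph (Fin t) (Fin t) ≠ ⊥ :=
    ne_bot_iff_exists_adj.2 ⟨.inl ⟨0, by omega⟩, .inr ⟨0, by omega⟩, by simp⟩
  obtain ⟨G, hGfree, hG⟩ := exists_free_ncard_edgeSet_eq_turanNumber n hK
  obtain ⟨B, hBG, hBbip, hB⟩ := G.exists_isBipartite_ncard_edgeSet_le_two_mul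
  obtain ⟨R, hRB, hR⟩ := B.exists_le_ncard_edgeSet_eq (k := G.edgeSet.ncard / 2) (by omega)
  have hRfree : (completeBipartiteGraph (Fin t) (Fin t)).Free R :=
    fun h => hGfree (h.mono_right (hRB.trans hBG))
  have hRclique : R.CliqueFree t := (hBbip.mono_left hRB).cliqueFree (by omega)
  refine ⟨R, not_containsUnavoidable_of_cliqueFree hRclique hRfree, ?_, ?_⟩ <;>
    rw [← hG] <;> apply sub_one_div_two_le_of_le_two_mul_add_one
  · omega
  · have hsum := R.ncard_edgeSet_add_ncard_edgeSet_compl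
    have hGsum := G.ncard_edgeSet_add_ncard_edgeSet_compl
    rw [Fintype.card_fin] at hsum hGsum
    omega
end

section
/- Let α > 0, let T be an n-vertex tournament that is α-far from being transitive, and let σ be an ordering of V(T) that minimises the number of backward edges. Then T either (1) contains at least αn²/1000 backward edges in σ, each of length at least n/50, or (2) contains a subtournament of order at least n/20 that is 6α-far from being transitive. -/
/-- `T` is a tournament: an orientation of the complete graph. -/
def IsTournament {V : Type*} (T : V → V → Prop) : Prop :=
  (∀ x, ¬ T x x) ∧ ∀ x y, x ≠ y → (T x y ↔ ¬ T y x)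

/-- The unavoidable `t`-tournament `𝒰_t` on `Fin 3 × Fin t`: three transitive classes
of order `t`, with all edges from class `i` to class `i + 1` (mod 3). -/
def UPat (t : ℕ) (p q : Fin 3 × Fin t) : Prop :=
  (p.1 = q.1 ∧ p.2 < q.2) ∨ q.1 = p.1 + 1

/-- `T` contains a copy of the unavoidable `t`-tournament `𝒰_t`. -/
def ContainsU {V : Type*} (T : V → V → Prop) (t : ℕ) : Prop :=
  ∃ f : Fin 3 × Fin t → V, Function.Injective f ∧
    ∀ p q : Fin 3 × Fin t, UPat t p q → T (f p) (f q)

/-- The number of backward edges of the ordering `σ` of the vertices of `T`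
(position `k` is occupied by the vertex `σ k`). -/
noncomputable def backCount {n : ℕ} {V : Type*} (T : V → V → Prop) (σ : Fin n ≃ V) : ℕ :=
  {p : Fin n × Fin n | p.1 < p.2 ∧ T (σ p.2) (σ p.1)}.ncard

/-!
Split the backward edges of the optimal ordering `σ` into long ones (length at least `n/50`) and
short ones. When `n ≤ 50` every backward edge is long. Otherwise, if fewer than `αn²/1000` are
long, almost all `αn²` backward edges are short, and averaging over the intervals of
`m = ⌈n/20⌉` consecutive positions (each short edge lies in about `m - n/50` of them) yields an
interval containing at least `6αm²` backward edges. Permuting the positions inside an interval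
does not change the relative order of any pair not contained in it, so by minimality of `σ` the
order `σ` induces on the interval is optimal for the subtournament it spans; hence every ordering
of that subtournament has at least `6αm²` backward edges.
-/

open Finset

variable {V : Type*} {n m : ℕ}

def backEdges (T : V → V → Prop) (σ : Fin n ≃ V) : Set (Fin n × Fin n) :=
  {p | p.1 < p.2 ∧ T (σ p.2) (σ p.1)}

lemma ncard_backEdges (T : V → V → Prop) (σ : Fin n ≃ V) :
    (backEdges T σ).ncard = backCount T σ :=
  rfl

lemma setOf_backEdges_and (T : V → V → Prop) (σ : Fin n ≃ V) (P : Fin n × Fin n → Prop) :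
    {p | p.1 < p.2 ∧ T (σ p.2) (σ p.1) ∧ P p} = backEdges T σ ∩ {p | P p} :=
  Set.ext fun _ => and_assoc.symm

section LocalMinimality

variable {W : Set (Fin n)} {ρ : Equiv.Perm (Fin n)}

lemma perm_lt_perm_of_notMem_prod (hW : W.OrdConnected) (hρW : ∀ k, ρ k ∈ W ↔ k ∈ W)
    (hfix : ∀ k ∉ W, ρ k = k) {p : Fin n × Fin n} (hp : p.1 < p.2) (hpW : p ∉ W ×ˢ W) :
    ρ p.1 < ρ p.2 := by
  by_cases h₁ : p.1 ∈ W <;> by_cases h₂ : p.2 ∈ W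
  · exact absurd ⟨h₁, h₂⟩ hpW
  · rw [hfix _ h₂]
    by_contra! h
    exact h₂ (hW.out h₁ ((hρW _).2 h₁) ⟨hp.le, h⟩)
  · rw [hfix _ h₁]
    by_contra! h
    exact h₁ (hW.out ((hρW _).2 h₂) h₂ ⟨h, hp.le⟩)
  · rw [hfix _ h₁, hfix _ h₂]
    exact hp

lemma ncard_backEdges_trans_sdiff_prod_le (T : V → V → Prop) (σ : Fin n ≃ V)
    (hW : W.OrdConnected) (hρW : ∀ k, ρ k ∈ W ↔ k ∈ W) (hfix : ∀ k ∉ W, ρ k = k) :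
    (backEdges T (ρ.trans σ) \ W ×ˢ W).ncard ≤ (backEdges T σ \ W ×ˢ W).ncard :=
  Set.ncard_le_ncard_of_injOn (Prod.map ρ ρ)
    (fun _ ⟨⟨hp, hT⟩, hpW⟩ => ⟨⟨perm_lt_perm_of_notMem_prod hW hρW hfix hp hpW, hT⟩,
      fun h => hpW ⟨(hρW _).1 h.1, (hρW _).1 h.2⟩⟩)
    (ρ.injective.prodMap ρ.injective).injOn

lemma ncard_backEdges_inter_prod_le_of_minimal {T : V → V → Prop} {σ : Fin n ≃ V}
    (hmin : ∀ σ' : Fin n ≃ V, backCount T σ ≤ backCount T σ') (hW : W.OrdConnected)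
    (hρW : ∀ k, ρ k ∈ W ↔ k ∈ W) (hfix : ∀ k ∉ W, ρ k = k) :
    (backEdges T σ ∩ W ×ˢ W).ncard ≤ (backEdges T (ρ.trans σ) ∩ W ×ˢ W).ncard := by
  have hσ := hmin (ρ.trans σ)
  rw [← ncard_backEdges, ← ncard_backEdges,
    ← Set.ncard_inter_add_ncard_sdiff_eq_ncard (backEdges T σ) (W ×ˢ W),
    ← Set.ncard_inter_add_ncard_sdiff_eq_ncard (backEdges T (ρ.trans σ)) (W ×ˢ W)] at hσ
  have := ncard_backEdges_trans_sdiff_prod_le T σ hW hρW hfix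
  omega

end LocalMinimality

section Restriction

variable (T : V → V → Prop) {σ σ' : Fin n ≃ V} (e : Fin m ↪o Fin n)

lemma image_prodMap_backEdges (τ : Equiv.Perm (Fin m)) (h : ∀ i, σ' (e i) = σ (e (τ i))) :
    Prod.map e e '' backEdges (fun i j => T (σ (e i)) (σ (e j))) τ
      = backEdges T σ' ∩ Set.range e ×ˢ Set.range e := by
  ext p
  constructor
  · rintro ⟨q, ⟨hq, hT⟩, rfl⟩
    exact ⟨⟨e.lt_iff_lt.2 hq, by simpa [h] using hT⟩, ⟨q.1, rfl⟩, ⟨q.2, rfl⟩⟩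
  · rintro ⟨⟨hp, hT⟩, ⟨i, hi⟩, ⟨j, hj⟩⟩
    obtain ⟨k, l⟩ := p
    subst hi hj
    exact ⟨(i, j), ⟨e.lt_iff_lt.1 hp, by simpa [h] using hT⟩, rfl⟩

lemma backCount_restrict (τ : Equiv.Perm (Fin m)) (h : ∀ i, σ' (e i) = σ (e (τ i))) :
    backCount (fun i j => T (σ (e i)) (σ (e j))) τ
      = (backEdges T σ' ∩ Set.range e ×ˢ Set.range e).ncard := by
  rw [← image_prodMap_backEdges T e τ h,
    Set.ncard_image_of_injective _ (e.injective.prodMap e.injective), ncard_backEdges]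

theorem backCount_restrict_one_le {T : V → V → Prop}
    (hmin : ∀ σ' : Fin n ≃ V, backCount T σ ≤ backCount T σ')
    (he : (Set.range e).OrdConnected) (τ : Equiv.Perm (Fin m)) :
    backCount (fun i j => T (σ (e i)) (σ (e j))) (1 : Equiv.Perm (Fin m))
      ≤ backCount (fun i j => T (σ (e i)) (σ (e j))) τ := by
  classical
  let ρ := τ.extendDomain (Equiv.ofInjective e e.injective)
  have hρ (i : Fin m) : ρ (e i) = e (τ i) :=
    τ.extendDomain_apply_image (Equiv.ofInjective e e.injective) i
  have hfix (k) (hk : k ∉ Set.range e) : ρ k = k :=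
    τ.extendDomain_apply_not_subtype _ hk
  have hρW (k) : ρ k ∈ Set.range e ↔ k ∈ Set.range e := by
    by_cases hk : k ∈ Set.range e
    · obtain ⟨i, rfl⟩ := hk
      simp [hρ]
    · simp [hfix k hk, hk]
  rw [backCount_restrict T e (1 : Equiv.Perm (Fin m)) (σ' := σ) fun _ => rfl,
    backCount_restrict T e τ (σ' := ρ.trans σ) fun i => congrArg σ (hρ i)]
  exact ncard_backEdges_inter_prod_le_of_minimal hmin he hρW hfix

end Restriction

def intervalEmb (a : ℕ) (h : a + m ≤ n) : Fin m ↪o Fin n :=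
  (Fin.natAddOrderEmb a).trans (Fin.castLEOrderEmb h)

lemma mem_range_intervalEmb {a : ℕ} {h : a + m ≤ n} {k : Fin n} :
    k ∈ Set.range (intervalEmb a h) ↔ a ≤ k ∧ (k : ℕ) < a + m := by
  constructor
  · rintro ⟨i, rfl⟩
    simp [intervalEmb]
  · rintro ⟨h₁, h₂⟩
    exact ⟨⟨k - a, by omega⟩, Fin.ext (by simp [intervalEmb]; omega)⟩

lemma ordConnected_range_intervalEmb (a : ℕ) (h : a + m ≤ n) :
    (Set.range (intervalEmb a h)).OrdConnected := by
  refine ⟨fun x hx y hy z hz => ?_⟩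
  rw [mem_range_intervalEmb] at hx hy ⊢
  have := Fin.le_def.1 hz.1
  have := Fin.le_def.1 hz.2
  omega

lemma exists_window_card_filter_ge {d : ℕ} (S : Finset (Fin n × Fin n))
    (hS : ∀ p ∈ S, p.1 ≤ p.2 ∧ (p.2 : ℕ) ≤ p.1 + d) (hm : 0 < m) (hmn : m ≤ n) :
    ∃ a, a + m ≤ n ∧
      (m - d) * #S ≤ (n + m) * #(S.filter fun p => a ≤ (p.1 : ℕ) ∧ (p.2 : ℕ) < a + m) := by
  -- Window `s` ends at position `s`, clamped into `[0, n)`: then a pair `(i, j)` with `j ≤ i + d`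
  -- lies in window `s` for every `s ∈ [j, i + m - 1]`, even near the ends.
  let start (s : ℕ) : ℕ := min (n - m) (s + 1 - m)
  let covers (p : Fin n × Fin n) (s : ℕ) : Prop := start s ≤ p.1 ∧ (p.2 : ℕ) < start s + m
  have hcover : ∀ p ∈ S, m - d ≤ #((range (n + m)).bipartiteAbove covers p) := by
    intro p hp
    have := hS p hp
    have := Fin.le_def.1 this.1
    have := p.2.isLt
    calc m - d ≤ #(Icc (p.2 : ℕ) (p.1 + m - 1)) := by simp; omega
      _ ≤ _ := card_le_card fun s hs => by simp [bipartiteAbove, covers, start] at hs ⊢; omega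
  have hdouble : #S * (m - d) ≤ ∑ s ∈ range (n + m), #(S.bipartiteBelow covers s) := by
    rw [← sum_card_bipartiteAbove_eq_sum_card_bipartiteBelow]
    simpa using card_nsmul_le_sum _ _ _ hcover
  have hsum : ∑ _s ∈ range (n + m), (m - d) * #S
      ≤ ∑ s ∈ range (n + m), (n + m) * #(S.bipartiteBelow covers s) := by
    rw [sum_const, card_range, smul_eq_mul, ← mul_sum, mul_comm (m - d)]
    exact Nat.mul_le_mul_left _ hdouble
  obtain ⟨s, -, hs⟩ := exists_le_of_sum_le (nonempty_range_iff.2 (by omega)) hsum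
  exact ⟨start s, by simp only [start]; omega, hs⟩

lemma six_mul_sq_le_of_window {α : ℝ} {n m d s w : ℕ} (hα : 0 ≤ α) (hm : 0 < m)
    (h40 : 40 * m ≤ 3 * n) (h20 : n ≤ 20 * m) (h50 : 50 * d ≤ n)
    (hs : α * n ^ 2 - α * n ^ 2 / 1000 ≤ s) (hwin : (m - d) * s ≤ (n + m) * w) :
    6 * α * m ^ 2 ≤ w := by
  have hdm : d ≤ m := by omega
  have h40' : 40 * (m : ℝ) ≤ 3 * n := by exact_mod_cast h40
  have h5d : 5 * (d : ℝ) ≤ 2 * m := by exact_mod_cast (by omega : 5 * d ≤ 2 * m)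
  have hwin' : ((m : ℝ) - d) * s ≤ (n + m) * w := by
    have := Nat.cast_le (α := ℝ).2 hwin
    push_cast [Nat.cast_sub hdm] at this
    exact this
  have hm' : (0 : ℝ) < m := by exact_mod_cast hm
  refine le_of_mul_le_mul_left ?_ (by positivity : (0 : ℝ) < n + m)
  calc ((n : ℝ) + m) * (6 * α * m ^ 2) = 6 * α * m * (m * (n + m)) := by ring
    _ ≤ 6 * α * m * (3 / 40 * n * (43 / 40 * n)) := by gcongr <;> linarith
    _ ≤ 3 / 5 * m * (α * n ^ 2 - α * n ^ 2 / 1000) := by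
      have : 0 ≤ α * m * n ^ 2 := by positivity
      linarith
    _ ≤ (m - d) * s := by
      have : 0 ≤ α * n ^ 2 := by positivity
      gcongr <;> linarith
    _ ≤ (n + m) * w := hwin'

lemma div_fifty_le_sub_of_le_fifty (hn : n ≤ 50) {i j : Fin n} (hij : i < j) :
    (n : ℝ) / 50 ≤ ((j - i : ℕ) : ℝ) := by
  have h₁ : (1 : ℝ) ≤ ((j - i : ℕ) : ℝ) := by exact_mod_cast (by omega : 1 ≤ (j : ℕ) - i)
  have h₂ : (n : ℝ) ≤ 50 := by exact_mod_cast hn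
  linarith

lemma le_add_div_fifty_of_sub_lt {i j : ℕ} (h : ((j - i : ℕ) : ℝ) < n / 50) : j ≤ i + n / 50 := by
  rw [lt_div_iff₀ (by norm_num)] at h
  have : (j - i) * 50 < n := by exact_mod_cast h
  omega

lemma card_filter_window_le_backCount_one {T : V → V → Prop} {σ : Fin n ≃ V}
    {S : Finset (Fin n × Fin n)} (hS : ↑S ⊆ backEdges T σ) {a : ℕ} (ha : a + m ≤ n) :
    #(S.filter fun p => a ≤ (p.1 : ℕ) ∧ (p.2 : ℕ) < a + m)
      ≤ backCount (fun i j => T (σ (intervalEmb a ha i)) (σ (intervalEmb a ha j)))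
          (1 : Equiv.Perm (Fin m)) := by
  rw [backCount_restrict T _ _ fun _ => rfl, ← Set.ncard_coe_finset]
  refine Set.ncard_le_ncard fun p hp => ?_
  simp only [coe_filter] at hp
  obtain ⟨hpS, h₁, h₂⟩ := hp
  have hpB := hS hpS
  have := Fin.lt_def.1 hpB.1
  exact ⟨hpB, mem_range_intervalEmb.2 ⟨h₁, by omega⟩, mem_range_intervalEmb.2 ⟨by omega, h₂⟩⟩

lemma exists_far_restriction_of_many_short {α : ℝ} (hα : 0 ≤ α) (hn : 50 < n)
    {T : V → V → Prop} {σ : Fin n ≃ V} (hmin : ∀ σ' : Fin n ≃ V, backCount T σ ≤ backCount T σ')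
    (S : Finset (Fin n × Fin n)) (hSB : ↑S ⊆ backEdges T σ)
    (hS : ∀ p ∈ S, (p.2 : ℕ) ≤ p.1 + n / 50) (hcard : α * n ^ 2 - α * n ^ 2 / 1000 ≤ #S) :
    ∃ (m : ℕ) (f : Fin m → V), Function.Injective f ∧ (n : ℝ) / 20 ≤ m ∧
      ∀ τ : Equiv.Perm (Fin m), 6 * α * (m : ℝ) ^ 2 ≤ backCount (fun i j => T (f i) (f j)) τ := by
  set m := (n + 19) / 20
  obtain ⟨a, ha, hwin⟩ := exists_window_card_filter_ge (m := m) S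
    (fun p hp => ⟨(hSB hp).1.le, hS p hp⟩) (by omega) (by omega)
  set e := intervalEmb a ha
  refine ⟨m, fun i => σ (e i), σ.injective.comp e.injective, ?_, fun τ => ?_⟩
  · rw [div_le_iff₀ (by norm_num)]
    exact_mod_cast (by omega : n ≤ m * 20)
  calc 6 * α * m ^ 2 ≤ _ :=
        six_mul_sq_le_of_window hα (by omega) (by omega) (by omega) (by omega) hcard hwin
    _ ≤ backCount (fun i j => T (σ (e i)) (σ (e j))) (1 : Equiv.Perm (Fin m)) := by
      exact_mod_cast card_filter_window_le_backCount_one hSB ha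
    _ ≤ _ := by
      exact_mod_cast backCount_restrict_one_le e hmin (ordConnected_range_intervalEmb a ha) τ

theorem statement4_general (α : ℝ) (hα : 0 < α) (n : ℕ) (T : Fin n → Fin n → Prop)
    (hfar : ∀ τ : Equiv.Perm (Fin n), α * (n : ℝ) ^ 2 ≤ (backCount T τ : ℝ))
    (σ : Equiv.Perm (Fin n))
    (hmin : ∀ τ : Equiv.Perm (Fin n), backCount T σ ≤ backCount T τ) :
    (α * (n : ℝ) ^ 2 / 1000 ≤
      (({p : Fin n × Fin n | p.1 < p.2 ∧ T (σ p.2) (σ p.1) ∧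
          (n : ℝ) / 50 ≤ (((p.2 : ℕ) - (p.1 : ℕ) : ℕ) : ℝ)}).ncard : ℝ)) ∨
    (∃ (m : ℕ) (f : Fin m → Fin n), Function.Injective f ∧ (n : ℝ) / 20 ≤ (m : ℝ) ∧
      ∀ τ : Equiv.Perm (Fin m),
        6 * α * (m : ℝ) ^ 2 ≤ (backCount (fun i j => T (f i) (f j)) τ : ℝ)) := by
  classical
  rw [setOf_backEdges_and]
  set L : Set (Fin n × Fin n) := {p | (n : ℝ) / 50 ≤ (((p.2 : ℕ) - (p.1 : ℕ) : ℕ) : ℝ)}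
  refine or_iff_not_imp_left.2 fun hfew => ?_
  have hαn : 0 ≤ α * n ^ 2 := by positivity
  have hn : 50 < n := by
    by_contra! hn
    have hall : backEdges T σ ⊆ L := fun p hp => div_fifty_le_sub_of_le_fifty hn hp.1
    rw [Set.inter_eq_left.2 hall, ncard_backEdges] at hfew
    linarith [hfar σ]
  have hsplit : ((backEdges T σ ∩ L).ncard + (backEdges T σ \ L).ncard : ℝ) = backCount T σ := by
    exact_mod_cast Set.ncard_inter_add_ncard_sdiff_eq_ncard (backEdges T σ) L
  refine exists_far_restriction_of_many_short hα.le hn hmin (backEdges T σ \ L).toFinset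
    (by simp) (fun p hp => ?_) ?_
  · rw [Set.mem_toFinset] at hp
    exact le_add_div_fifty_of_sub_lt (not_le.1 hp.2)
  · rw [← Set.ncard_eq_toFinset_card']
    linarith [hfar σ]

/-- **Lemma.** If `T` is an `n`-vertex tournament that is `α`-far from transitive and `σ`
minimises the number of backward edges, then `T` either has at least `αn²/1000` backward
edges in `σ` of length at least `n/50`, or a subtournament of order at least `n/20` that
is `6α`-far from transitive. -/
theorem statement4 (α : ℝ) (hα : 0 < α) (n : ℕ) (T : Fin n → Fin n → Prop)
    (hT : IsTournament T)
    (hfar : ∀ τ : Equiv.Perm (Fin n), α * (n : ℝ) ^ 2 ≤ (backCount T τ : ℝ))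
    (σ : Equiv.Perm (Fin n))
    (hmin : ∀ τ : Equiv.Perm (Fin n), backCount T σ ≤ backCount T τ) :
    (α * (n : ℝ) ^ 2 / 1000 ≤
      (({p : Fin n × Fin n | p.1 < p.2 ∧ T (σ p.2) (σ p.1) ∧
          (n : ℝ) / 50 ≤ (((p.2 : ℕ) - (p.1 : ℕ) : ℕ) : ℝ)}).ncard : ℝ)) ∨
    (∃ (m : ℕ) (f : Fin m → Fin n), Function.Injective f ∧ (n : ℝ) / 20 ≤ (m : ℝ) ∧
      ∀ τ : Equiv.Perm (Fin m),
        6 * α * (m : ℝ) ^ 2 ≤ (backCount (fun i j => T (f i) (f j)) τ : ℝ)) :=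
  statement4_general α hα n T hfar σ hmin
end

section
/- For every positive integer t and every ε > 0, there exists a constant C = C(t, ε) > 0 such that every bipartite graph G with vertex classes X and Y satisfying |X| ≥ C, |Y| ≥ C, and having at least ε|X||Y| edges contains a copy of the complete bipartite graph K_{t,t} (with t vertices in X and t vertices in Y). -/
/-! If no `t`-set of `X` has `t` common neighbours, counting the pairs `(S, y)` with `S` a
`t`-subset of the neighbourhood of `y` gives `∑_y C(d(y), t) ≤ t · C(|X|, t) ≤ t |X|^t / t!`.
On the other hand at least `ε|Y|/2` vertices `y` have degree `d(y) ≥ ε|X|/2`, and once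
`|X| > 4t/ε` each of them has `C(d(y), t) ≥ (ε|X|/4)^t / t!`. Together these force
`|Y| ≤ (2t/ε) (4/ε)^t`. -/

open Finset
open scoped Nat

namespace Finset

theorem mul_card_le_two_mul_mul_card_filter_of_le_sum {ι K : Type*} [Field K] [LinearOrder K]
    [IsStrictOrderedRing K] (s : Finset ι) (f : ι → K) {a M : K} (ha : 0 ≤ a)
    (hM : ∀ i ∈ s, f i ≤ M) (hsum : a * #s ≤ ∑ i ∈ s, f i) :
    a * #s ≤ 2 * (M * #{i ∈ s | a / 2 ≤ f i}) := by
  have hhigh : ∑ i ∈ s with a / 2 ≤ f i, f i ≤ M * #{i ∈ s | a / 2 ≤ f i} := by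
    rw [mul_comm, ← nsmul_eq_mul]
    exact sum_le_card_nsmul _ f M fun i hi => hM i (mem_filter.1 hi).1
  have hlow : ∑ i ∈ s with ¬a / 2 ≤ f i, f i ≤ a / 2 * #s := by
    calc ∑ i ∈ s with ¬a / 2 ≤ f i, f i
        ≤ #{i ∈ s | ¬a / 2 ≤ f i} • (a / 2) :=
          sum_le_card_nsmul _ _ _ fun i hi => (not_le.1 (mem_filter.1 hi).2).le
      _ ≤ a / 2 * #s := by
          rw [nsmul_eq_mul, mul_comm]
          gcongr
          exact filter_subset _ _
  rw [← sum_filter_add_sum_filter_not s (fun i => a / 2 ≤ f i)] at hsum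
  linarith

end Finset

namespace Nat

theorem pow_le_factorial_mul_choose {K : Type*} [Field K] [LinearOrder K]
    [IsStrictOrderedRing K] {x : K} {n t : ℕ} (hx : 2 * t ≤ x) (hn : x ≤ n) :
    (x / 2) ^ t ≤ t ! * n.choose t := by
  have htn : t ≤ n + 1 := by exact_mod_cast (by linarith : (t : K) ≤ n + 1)
  calc (x / 2) ^ t ≤ ((n + 1 - t : ℕ) : K) ^ t := by
        gcongr
        · linarith
        · push_cast [htn]; linarith
    _ ≤ t ! * n.choose t := by
      exact_mod_cast (pow_sub_le_descFactorial n t).trans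
        (descFactorial_eq_factorial_mul_choose n t).le

end Nat

section Bipartite

variable {α β : Type*} [Fintype α] [Fintype β] (r : α → β → Prop) [∀ a b, Decidable (r a b)]

def nbhd (y : β) : Finset α := {x | r x y}

theorem ncard_setOf_eq_sum_card_nbhd :
    {p : α × β | r p.1 p.2}.ncard = ∑ y, #(nbhd r y) := by
  rw [Set.ncard_eq_toFinset_card', Set.toFinset_ofPred, card_filter, Fintype.sum_prod_type,
    sum_comm]
  simp only [nbhd, card_filter]

theorem sum_choose_card_nbhd_le [DecidableEq α] {t c : ℕ}
    (hc : ∀ S : Finset α, #S = t → #{y | S ⊆ nbhd r y} ≤ c) :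
    ∑ y, (#(nbhd r y)).choose t ≤ c * (Fintype.card α).choose t := by
  calc ∑ y, (#(nbhd r y)).choose t
      = ∑ y, #((univ.powersetCard t).bipartiteBelow (· ⊆ nbhd r ·) y) := by
        refine sum_congr rfl fun y _ => ?_
        rw [← card_powersetCard]
        congr 1
        ext S
        simp [bipartiteBelow, mem_powersetCard, and_comm]
    _ = ∑ S ∈ univ.powersetCard t, #(univ.bipartiteAbove (· ⊆ nbhd r ·) S) :=
        (sum_card_bipartiteAbove_eq_sum_card_bipartiteBelow _).symm
    _ ≤ ∑ _S ∈ univ.powersetCard t, c :=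
        sum_le_sum fun S hS => hc S (mem_powersetCard.1 hS).2
    _ = c * (Fintype.card α).choose t := by
        rw [sum_const, card_powersetCard, card_univ, smul_eq_mul, mul_comm]

open Fintype in
theorem pow_mul_le_factorial_mul_sum_choose {t : ℕ} {ε : ℝ} (hε : 0 < ε)
    (hdens : ε * card α * card β ≤ ∑ y, (#(nbhd r y) : ℝ)) (hα : 4 * t / ε < card α) :
    ε * card β / 2 * (ε * card α / 4) ^ t ≤ t ! * ∑ y, ((#(nbhd r y)).choose t : ℝ) := by
  set m : ℝ := card α
  have hm : 0 < m := lt_of_le_of_lt (by positivity) hα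
  have htm : 2 * t ≤ ε * m / 2 := by
    rw [div_lt_iff₀ hε] at hα
    linarith
  set Y₀ : Finset β := {y | ε * m / 2 ≤ #(nbhd r y)}
  have hY₀ : ε * card β / 2 ≤ #Y₀ := by
    have h := mul_card_le_two_mul_mul_card_filter_of_le_sum univ (fun y => (#(nbhd r y) : ℝ))
      (a := ε * m) (M := m) (by positivity) (fun y _ => Nat.cast_le.2 (card_le_univ (nbhd r y)))
      (by rwa [card_univ])
    rw [card_univ] at h
    refine le_of_mul_le_mul_left ?_ hm
    linarith
  calc ε * card β / 2 * (ε * m / 4) ^ t ≤ #Y₀ * (ε * m / 4) ^ t := by gcongr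
    _ = ∑ y ∈ Y₀, (ε * m / 2 / 2) ^ t := by rw [sum_const, nsmul_eq_mul]; ring
    _ ≤ ∑ y ∈ Y₀, (t ! * (#(nbhd r y)).choose t : ℝ) :=
        sum_le_sum fun y hy => Nat.pow_le_factorial_mul_choose htm (mem_filter.1 hy).2
    _ ≤ ∑ y, (t ! * (#(nbhd r y)).choose t : ℝ) :=
        sum_le_sum_of_subset_of_nonneg (subset_univ _) fun _ _ _ => by positivity
    _ = t ! * ∑ y, ((#(nbhd r y)).choose t : ℝ) := (mul_sum _ _ _).symm

open Fintype in
theorem card_le_of_card_filter_subset_nbhd_le [DecidableEq α] {t c : ℕ} {ε : ℝ} (hε : 0 < ε)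
    (hc : ∀ S : Finset α, #S = t → #{y | S ⊆ nbhd r y} ≤ c)
    (hdens : ε * card α * card β ≤ ∑ y, (#(nbhd r y) : ℝ)) (hα : 4 * t / ε < card α) :
    (card β : ℝ) ≤ 2 * c / ε * (4 / ε) ^ t := by
  have hm : (0 : ℝ) < card α := lt_of_le_of_lt (by positivity) hα
  have key : ε * card β / 2 * (ε / 4) ^ t * (card α : ℝ) ^ t ≤ c * (card α : ℝ) ^ t :=
    calc ε * card β / 2 * (ε / 4) ^ t * (card α : ℝ) ^ t
        = ε * card β / 2 * (ε * card α / 4) ^ t := by ring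
      _ ≤ t ! * ∑ y, ((#(nbhd r y)).choose t : ℝ) :=
        pow_mul_le_factorial_mul_sum_choose r hε hdens hα
      _ ≤ t ! * (c * (card α).choose t) := by
        gcongr
        exact_mod_cast sum_choose_card_nbhd_le r hc
      _ ≤ t ! * (c * ((card α : ℝ) ^ t / t !)) := by
        gcongr
        exact Nat.choose_le_pow_div t _
      _ = c * (card α : ℝ) ^ t := by field_simp
  have hbound := le_of_mul_le_mul_right key (pow_pos hm t)
  have hinv : (ε / 4) ^ t * (4 / ε) ^ t = 1 := by
    rw [← mul_pow, div_mul_div_comm, mul_comm ε 4, div_self (by positivity), one_pow]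
  calc (card β : ℝ) = ε * card β / 2 * (ε / 4) ^ t * (2 / ε * (4 / ε) ^ t) := by
        field_simp
        rw [mul_assoc, hinv, mul_one]
    _ ≤ c * (2 / ε * (4 / ε) ^ t) := by gcongr
    _ = 2 * c / ε * (4 / ε) ^ t := by ring

end Bipartite

theorem statement7_general (t : ℕ) (ε : ℝ) (hε : 0 < ε) :
    ∃ C : ℝ, 0 < C ∧
      ∀ (m k : ℕ) (E : Fin m → Fin k → Prop),
        C ≤ (m : ℝ) → C ≤ (k : ℝ) →
        ε * (m : ℝ) * (k : ℝ) ≤ (({p : Fin m × Fin k | E p.1 p.2}).ncard : ℝ) →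
        ∃ (A : Finset (Fin m)) (B : Finset (Fin k)),
          A.card = t ∧ B.card = t ∧ ∀ a ∈ A, ∀ b ∈ B, E a b := by
  classical
  refine ⟨4 * t / ε + 2 * t / ε * (4 / ε) ^ t + 1, by positivity, ?_⟩
  intro m k E hm hk hE
  by_contra hfree
  have hc : ∀ S : Finset (Fin m), #S = t → #{y | S ⊆ nbhd E y} ≤ t := by
    intro S hS
    by_contra! hlarge
    obtain ⟨B, hB, hBcard⟩ := exists_subset_card_eq hlarge.le
    refine hfree ⟨S, B, hS, hBcard, fun a ha b hb => ?_⟩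
    simpa [nbhd] using (mem_filter.1 (hB hb)).2 ha
  rw [ncard_setOf_eq_sum_card_nbhd, Nat.cast_sum] at hE
  have hkst := card_le_of_card_filter_subset_nbhd_le E hε hc (by simpa using hE)
    (by simp only [Fintype.card_fin]; linarith [show 0 ≤ 2 * t / ε * (4 / ε) ^ t by positivity])
  simp only [Fintype.card_fin] at hkst
  linarith [show 0 ≤ 4 * t / ε by positivity]

/-- **Proposition (bipartite Turán problems are degenerate).** For every `t ≥ 1` and `ε > 0`
there is `C = C(t, ε) > 0` such that every bipartite graph between classes `X` and `Y`
(modelled as a relation `E : Fin m → Fin k → Prop`) with `|X|, |Y| ≥ C` and at least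
`ε|X||Y|` edges contains a copy of `K_{t,t}`. -/
theorem statement7 (t : ℕ) (ht : 0 < t) (ε : ℝ) (hε : 0 < ε) :
    ∃ C : ℝ, 0 < C ∧
      ∀ (m k : ℕ) (E : Fin m → Fin k → Prop),
        C ≤ (m : ℝ) → C ≤ (k : ℝ) →
        ε * (m : ℝ) * (k : ℝ) ≤ (({p : Fin m × Fin k | E p.1 p.2}).ncard : ℝ) →
        ∃ (A : Finset (Fin m)) (B : Finset (Fin k)),
          A.card = t ∧ B.card = t ∧ ∀ a ∈ A, ∀ b ∈ B, E a b :=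
  statement7_general t ε hε
end

section
/- For every integer t ≥ 3 and every ε > 0, there exists a constant C₁ = C₁(t, ε) such that the following holds. Let the edges of the complete graph G = K_n be two-coloured red and blue so that the number of blue edges is at least the number of red edges, and suppose the colouring contains no unavoidable t-colouring. Then there is a set S ⊆ V(G) of at most C₁ vertices such that in the induced two-coloured complete graph G' = G[V(G) \ S] on n' vertices, every vertex is incident to at least (1 − 2ε)n' blue edges. -/
open Finset
open scoped Classical

namespace SimpleGraph

variable {V : Type*} (G : SimpleGraph V)

noncomputable def nbrsIn (A : Finset V) (v : V) : Finset V := {a ∈ A | G.Adj v a}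

noncomputable def commonNbrsIn (B S : Finset V) : Finset V := {b ∈ B | ∀ a ∈ S, G.Adj b a}

variable {G}

@[simp]
lemma mem_nbrsIn {A : Finset V} {v u : V} : u ∈ G.nbrsIn A v ↔ u ∈ A ∧ G.Adj v u := mem_filter

@[simp]
lemma mem_commonNbrsIn {B S : Finset V} {b : V} :
    b ∈ G.commonNbrsIn B S ↔ b ∈ B ∧ ∀ a ∈ S, G.Adj b a := mem_filter

lemma nbrsIn_subset (A : Finset V) (v : V) : G.nbrsIn A v ⊆ A := filter_subset _ _

lemma commonNbrsIn_subset (B S : Finset V) : G.commonNbrsIn B S ⊆ B := filter_subset _ _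

variable (G)

lemma nbrsIn_erase_self (A : Finset V) (v : V) : G.nbrsIn (A.erase v) v = G.nbrsIn A v := by
  ext u
  simp only [mem_nbrsIn, mem_erase, and_congr_left_iff, and_iff_right_iff_imp]
  exact fun h _ => h.ne'

lemma card_nbrsIn_univ_le [Fintype V] (W : Finset V) (v : V) :
    #(G.nbrsIn univ v) ≤ #(G.nbrsIn W v) + #Wᶜ :=
  (card_le_card fun u hu => by
    by_cases huW : u ∈ W
    · exact mem_union_left _ (mem_nbrsIn.2 ⟨huW, (mem_nbrsIn.1 hu).2⟩)
    · exact mem_union_right _ (mem_compl.2 huW)).trans (card_union_le _ _)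

lemma isCompleteBetween_commonNbrsIn (B S : Finset V) :
    G.IsCompleteBetween (G.commonNbrsIn B S : Set V) (S : Set V) :=
  fun _ hb a ha => (mem_commonNbrsIn.1 hb).2 a ha

lemma card_nbrsIn_add_card_nbrsIn_compl {A : Finset V} {v : V} (hv : v ∉ A) :
    #(G.nbrsIn A v) + #(Gᶜ.nbrsIn A v) = #A := by
  have : Gᶜ.nbrsIn A v = {a ∈ A | ¬ G.Adj v a} := by
    ext a
    simp only [mem_nbrsIn, compl_adj, mem_filter]
    exact and_congr_right fun ha => and_iff_right (ne_of_mem_of_not_mem ha hv).symm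
  rw [this]
  exact card_filter_add_card_filter_not _

lemma sum_card_nbrsIn_comm (A B : Finset V) :
    ∑ b ∈ B, #(G.nbrsIn A b) = ∑ a ∈ A, #(G.nbrsIn B a) := by
  simpa only [bipartiteAbove, bipartiteBelow, nbrsIn, G.adj_comm]
    using sum_card_bipartiteAbove_eq_sum_card_bipartiteBelow (s := B) (t := A) (r := G.Adj)

lemma sum_choose_card_nbrsIn (A B : Finset V) (m : ℕ) :
    ∑ b ∈ B, (#(G.nbrsIn A b)).choose m = ∑ S ∈ A.powersetCard m, #(G.commonNbrsIn B S) := by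
  have hpow : ∀ b, (G.nbrsIn A b).powersetCard m =
      (A.powersetCard m).bipartiteAbove (fun b S => ∀ a ∈ S, G.Adj b a) b := by
    intro b
    ext S
    simp only [mem_powersetCard, mem_bipartiteAbove, subset_iff, mem_nbrsIn]
    grind
  simp_rw [← card_powersetCard, hpow]
  exact sum_card_bipartiteAbove_eq_sum_card_bipartiteBelow _

lemma sum_card_nbrsIn_univ [Fintype V] : ∑ v, #(G.nbrsIn univ v) = 2 * G.edgeSet.ncard := by
  rw [← coe_edgeFinset, Set.ncard_coe_finset, ← sum_degrees_eq_twice_card_edges]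
  refine sum_congr rfl fun v _ => ?_
  rw [← card_neighborFinset_eq_degree]
  congr 1
  ext u
  simp

lemma sum_card_nbrsIn_univ_le_compl [Fintype V] (h : G.edgeSet.ncard ≤ Gᶜ.edgeSet.ncard) :
    ∑ v, #(G.nbrsIn univ v) ≤ ∑ v, #(Gᶜ.nbrsIn univ v) := by
  rw [sum_card_nbrsIn_univ, sum_card_nbrsIn_univ]
  omega

variable {G}

lemma isClique_insert_of_subset_nbrsIn {A S : Finset V} {v : V} (hv : v ∈ A)
    (hS : S ⊆ G.nbrsIn (A.erase v) v) (hc : G.IsClique (S : Set V)) :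
    insert v S ⊆ A ∧ #(insert v S) = #S + 1 ∧ G.IsClique ((insert v S : Finset V) : Set V) := by
  have hSA : S ⊆ A.erase v := hS.trans (nbrsIn_subset _ _)
  refine ⟨insert_subset hv (hSA.trans (erase_subset _ _)),
    card_insert_of_notMem fun h => by simpa using hSA h, ?_⟩
  rw [coe_insert]
  exact hc.insert fun u hu _ => (mem_nbrsIn.1 (hS hu)).2

variable (G) in
theorem exists_isClique_or_compl_isClique :
    ∀ (a b : ℕ) (A : Finset V), (a + b).choose a ≤ #A →
      (∃ S ⊆ A, #S = a ∧ G.IsClique (S : Set V)) ∨ (∃ S ⊆ A, #S = b ∧ Gᶜ.IsClique (S : Set V))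
  | 0, _, _, _ => Or.inl ⟨∅, empty_subset _, rfl, by simp⟩
  | _ + 1, 0, _, _ => Or.inr ⟨∅, empty_subset _, rfl, by simp⟩
  | a + 1, b + 1, A, hA => by
    obtain ⟨v, hv⟩ : A.Nonempty := card_pos.1 ((Nat.choose_pos (by omega)).trans_le hA)
    have hsplit := G.card_nbrsIn_add_card_nbrsIn_compl (notMem_erase v A)
    have hpascal : (a + 1 + (b + 1)).choose (a + 1) =
        (a + (b + 1)).choose a + (a + 1 + b).choose (a + 1) := by
      rw [show a + 1 + (b + 1) = a + (b + 1) + 1 by omega, Nat.choose_succ_succ,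
        show a + (b + 1) = a + 1 + b by omega]
    rw [card_erase_of_mem hv] at hsplit
    by_cases hP : (a + (b + 1)).choose a ≤ #(G.nbrsIn (A.erase v) v)
    · rcases exists_isClique_or_compl_isClique a (b + 1) _ hP with
        ⟨S, hS, rfl, hc⟩ | ⟨S, hS, hcard, hc⟩
      · obtain ⟨hsub, hcard, hc'⟩ := isClique_insert_of_subset_nbrsIn hv hS hc
        exact Or.inl ⟨_, hsub, hcard, hc'⟩
      · exact Or.inr ⟨S, hS.trans ((nbrsIn_subset _ _).trans (erase_subset _ _)), hcard, hc⟩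
    · have hQ : (a + 1 + b).choose (a + 1) ≤ #(Gᶜ.nbrsIn (A.erase v) v) := by omega
      rcases exists_isClique_or_compl_isClique (a + 1) b _ hQ with
        ⟨S, hS, hcard, hc⟩ | ⟨S, hS, rfl, hc⟩
      · exact Or.inl ⟨S, hS.trans ((nbrsIn_subset _ _).trans (erase_subset _ _)), hcard, hc⟩
      · obtain ⟨hsub, hcard, hc'⟩ := isClique_insert_of_subset_nbrsIn hv hS hc
        exact Or.inr ⟨_, hsub, hcard, hc'⟩
termination_by a b => a + b

variable (G)

/-- Double-count the pairs `(b, S)` with `S` an `m`-set of neighbours of `b`,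
then use the convexity of `x ↦ x ^ m`. -/
lemma pow_sum_tsub_le_of_forall_card_commonNbrsIn_le (A B : Finset V) {m r : ℕ} (hm : 1 ≤ m)
    (hr : ∀ S ⊆ A, #S = m → #(G.commonNbrsIn B S) ≤ r) :
    (∑ b ∈ B, (#(G.nbrsIn A b) - m)) ^ m ≤ #B ^ (m - 1) * (#A ^ m * r) := by
  obtain ⟨k, rfl⟩ : ∃ k, m = k + 1 := ⟨m - 1, by omega⟩
  have hpow : ∑ b ∈ B, (#(G.nbrsIn A b) - (k + 1)) ^ (k + 1) ≤ #A ^ (k + 1) * r :=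
    calc ∑ b ∈ B, (#(G.nbrsIn A b) - (k + 1)) ^ (k + 1)
        ≤ ∑ b ∈ B, (k + 1).factorial * (#(G.nbrsIn A b)).choose (k + 1) := sum_le_sum fun b _ => by
          rw [← Nat.descFactorial_eq_factorial_mul_choose]
          exact (Nat.pow_le_pow_left (by omega) _).trans (Nat.pow_sub_le_descFactorial _ _)
      _ = (k + 1).factorial * ∑ S ∈ A.powersetCard (k + 1), #(G.commonNbrsIn B S) := by
          rw [← mul_sum, sum_choose_card_nbrsIn]
      _ ≤ (k + 1).factorial * ∑ S ∈ A.powersetCard (k + 1), r := by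
          gcongr with S hS
          exact hr S (mem_powersetCard.1 hS).1 (mem_powersetCard.1 hS).2
      _ = (#A).descFactorial (k + 1) * r := by
          rw [sum_const, card_powersetCard, smul_eq_mul, Nat.descFactorial_eq_factorial_mul_choose,
            mul_assoc]
      _ ≤ #A ^ (k + 1) * r := Nat.mul_le_mul_right _ (Nat.descFactorial_le_pow _ _)
  calc _ ≤ #B ^ k * ∑ b ∈ B, (#(G.nbrsIn A b) - (k + 1)) ^ (k + 1) :=
        pow_sum_le_card_mul_sum_pow (fun _ _ => Nat.zero_le _) k
    _ ≤ _ := by rw [Nat.add_sub_cancel]; exact Nat.mul_le_mul_left _ hpow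

theorem exists_card_commonNbrsIn_gt (A B : Finset V) {m r : ℕ} (hm : 1 ≤ m) {δ : ℝ} (hδ : 0 ≤ δ)
    (hsum : δ * #A * #B + m * #B ≤ ∑ b ∈ B, (#(G.nbrsIn A b) : ℝ)) (hr : r < δ ^ m * #B) :
    ∃ S ⊆ A, #S = m ∧ r < #(G.commonNbrsIn B S) := by
  by_contra! hcon
  have key := G.pow_sum_tsub_le_of_forall_card_commonNbrsIn_le A B hm hcon
  have hB : 0 < (#B : ℝ) := by
    by_contra! h
    nlinarith [pow_nonneg hδ m, (Nat.cast_nonneg r : (0 : ℝ) ≤ r)]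
  have hA : 0 < (#A : ℝ) := by
    by_contra! h
    have hA : A = ∅ := card_eq_zero.1 (by exact_mod_cast h.antisymm (Nat.cast_nonneg _))
    simp only [hA, (nbrsIn_subset _ _).antisymm (empty_subset _), card_empty, Nat.cast_zero,
      sum_const_zero] at hsum
    nlinarith [(Nat.one_le_cast (α := ℝ)).2 hm]
  have hlow : δ * #A * #B ≤ ((∑ b ∈ B, (#(G.nbrsIn A b) - m) : ℕ) : ℝ) := by
    have htsub : ∀ a : ℕ, (a : ℝ) - m ≤ ((a - m : ℕ) : ℝ) := fun a => by
      rcases le_total m a with h | h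
      · rw [Nat.cast_sub h]
      · rw [Nat.sub_eq_zero_of_le h, Nat.cast_zero, sub_nonpos]; exact_mod_cast h
    push_cast
    calc δ * #A * #B ≤ ∑ b ∈ B, ((#(G.nbrsIn A b) : ℝ) - m) := by
          rw [sum_sub_distrib, sum_const, nsmul_eq_mul]; linarith
      _ ≤ _ := sum_le_sum fun b _ => htsub _
  have hexp : (δ * #A * #B) ^ m = (#B : ℝ) ^ (m - 1) * (#A ^ m * (δ ^ m * #B)) := by
    obtain ⟨k, rfl⟩ : ∃ k, m = k + 1 := ⟨m - 1, by omega⟩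
    rw [Nat.add_sub_cancel]; ring
  have hupper : (δ * #A * #B) ^ m ≤ (#B : ℝ) ^ (m - 1) * (#A ^ m * r) :=
    (pow_le_pow_left₀ (by positivity) hlow m).trans (by exact_mod_cast key)
  have hlower : (#B : ℝ) ^ (m - 1) * (#A ^ m * r) < (δ * #A * #B) ^ m := by
    rw [hexp]; gcongr
  linarith

end SimpleGraph

open SimpleGraph

section Unavoidable

variable {V : Type*} {R G : SimpleGraph V} {t : ℕ}

lemma containsUnavoidable_of_isCompleteBetween (hG : G = R ∨ G = Rᶜ) {X Y : Finset V}
    (hX : #X = t) (hY : #Y = t) (hXc : G.IsClique (X : Set V))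
    (hYc : G.IsClique (Y : Set V) ∨ Gᶜ.IsClique (Y : Set V))
    (hXY : Gᶜ.IsCompleteBetween (X : Set V) (Y : Set V)) : ContainsUnavoidable R t :=
  ⟨X, Y, disjoint_coe.1 hXY.disjoint, hX, hY, G, hG, hXc, hYc, fun _ hx _ hy => hXY hx hy⟩

lemma card_lt_of_isCompleteBetween (hnp : ¬ ContainsUnavoidable R t) (hG : G = R ∨ G = Rᶜ)
    {X B : Finset V} (hX : #X = t) (hXc : G.IsClique (X : Set V))
    (hXB : Gᶜ.IsCompleteBetween (X : Set V) (B : Set V)) : #B < (t + t).choose t := by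
  by_contra! h
  obtain ⟨Y, hYB, hY, hYc⟩ | ⟨Y, hYB, hY, hYc⟩ := G.exists_isClique_or_compl_isClique t t B h
  all_goals exact hnp (containsUnavoidable_of_isCompleteBetween hG hX hY hXc (by tauto)
    fun _ hx _ hy => hXB hx (hYB hy))

lemma containsUnavoidable_of_compl_isCompleteBetween {S T : Finset V}
    (hS : (t + t).choose t ≤ #S) (hT : (t + t).choose t ≤ #T)
    (hSfree : ∀ Y ⊆ S, #Y = t → ¬ Rᶜ.IsClique (Y : Set V))
    (hTfree : ∀ Y ⊆ T, #Y = t → ¬ Rᶜ.IsClique (Y : Set V))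
    (hST : Rᶜ.IsCompleteBetween (S : Set V) (T : Set V)) : ContainsUnavoidable R t := by
  obtain ⟨X, hXS, hX, hXc⟩ := (R.exists_isClique_or_compl_isClique t t S hS).resolve_right
    fun ⟨Y, hYS, hY, hYc⟩ => hSfree Y hYS hY hYc
  obtain ⟨Y, hYT, hY, hYc⟩ := (R.exists_isClique_or_compl_isClique t t T hT).resolve_right
    fun ⟨Y, hYT, hY, hYc⟩ => hTfree Y hYT hY hYc
  exact containsUnavoidable_of_isCompleteBetween (Or.inl rfl) hX hY hXc (Or.inl hYc)
    fun _ hx _ hy => hST (hXS hx) (hYT hy)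

lemma card_filter_le_card_compl_nbrsIn_le [Fintype V] (hnp : ¬ ContainsUnavoidable R t)
    {Z : Finset V} (hZ : R.IsClique (Z : Set V)) :
    #{v | t ≤ #(Rᶜ.nbrsIn Z v)} ≤ (#Z).choose t * (t + t).choose t :=
  calc #{v | t ≤ #(Rᶜ.nbrsIn Z v)}
      ≤ #((Z.powersetCard t).biUnion (Rᶜ.commonNbrsIn univ)) := card_le_card fun v hv => by
        obtain ⟨X, hX, hXcard⟩ := exists_subset_card_eq (mem_filter.1 hv).2
        exact mem_biUnion.2 ⟨X, mem_powersetCard.2 ⟨hX.trans (nbrsIn_subset _ _), hXcard⟩,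
          mem_commonNbrsIn.2 ⟨mem_univ _, fun x hx => (mem_nbrsIn.1 (hX hx)).2⟩⟩
    _ ≤ ∑ X ∈ Z.powersetCard t, #(Rᶜ.commonNbrsIn univ X) := card_biUnion_le
    _ ≤ ∑ X ∈ Z.powersetCard t, (t + t).choose t := sum_le_sum fun X hX => by
        obtain ⟨hXZ, hXcard⟩ := mem_powersetCard.1 hX
        exact (card_lt_of_isCompleteBetween hnp (Or.inl rfl) hXcard (hZ.subset (coe_subset.2 hXZ))
          (isCompleteBetween_commonNbrsIn _ _ _).symm).le
    _ = _ := by rw [sum_const, card_powersetCard, smul_eq_mul]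

lemma not_isClique_compl_of_card_nbrsIn_compl_lt (hnp : ¬ ContainsUnavoidable R t)
    {Z Y : Finset V} (hZ : R.IsClique (Z : Set V)) (hZcard : #Z = t * t) (hY : #Y = t)
    (hYZ : Disjoint Y Z) (hYdeg : ∀ y ∈ Y, #(Rᶜ.nbrsIn Z y) < t) :
    ¬ Rᶜ.IsClique (Y : Set V) := by
  intro hYc
  set Z' := R.commonNbrsIn Z Y
  have hsdiff : Z \ Z' ⊆ Y.biUnion (Rᶜ.nbrsIn Z) := fun z hz => by
    obtain ⟨hzZ, hz'⟩ := mem_sdiff.1 hz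
    simp only [Z', mem_commonNbrsIn, hzZ, true_and, not_forall] at hz'
    obtain ⟨y, hy, hnadj⟩ := hz'
    exact mem_biUnion.2 ⟨y, hy, mem_nbrsIn.2 ⟨hzZ, (compl_adj _ _ _).2
      ⟨fun h => disjoint_left.1 hYZ hy (h ▸ hzZ), fun h => hnadj h.symm⟩⟩⟩
  have hcard : #(Z \ Z') ≤ t * t - t :=
    calc #(Z \ Z') ≤ #(Y.biUnion (Rᶜ.nbrsIn Z)) := card_le_card hsdiff
      _ ≤ ∑ y ∈ Y, #(Rᶜ.nbrsIn Z y) := card_biUnion_le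
      _ ≤ ∑ y ∈ Y, (t - 1) := sum_le_sum fun y hy => Nat.le_sub_one_of_lt (hYdeg y hy)
      _ = t * t - t := by rw [sum_const, hY, smul_eq_mul, Nat.mul_sub_one]
  have hZ' : t ≤ #Z' := by
    have := card_le_card_sdiff_add_card (s := Z) (t := Z')
    have := Nat.le_mul_self t
    omega
  obtain ⟨Y', hY'Z', hY'⟩ := exists_subset_card_eq hZ'
  refine hnp (containsUnavoidable_of_isCompleteBetween (Or.inr rfl) hY hY' hYc (Or.inr ?_) ?_)
  · rw [compl_compl]
    exact hZ.subset (coe_subset.2 (hY'Z'.trans (commonNbrsIn_subset _ _)))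
  · rw [compl_compl]
    exact fun _ hy _ hz => ((mem_commonNbrsIn.1 (hY'Z' hz)).2 _ hy).symm

end Unavoidable

section Counting

variable {V : Type*} [Fintype V] {R : SimpleGraph V} {t : ℕ}

lemma card_mul_pred_le_sum_card_compl_nbrsIn
    (hdeg : ∑ v, #(R.nbrsIn univ v) ≤ ∑ v, #(Rᶜ.nbrsIn univ v)) (W : Finset V) :
    #W * (#W - 1) ≤ 2 * ∑ v ∈ W, #(Rᶜ.nbrsIn W v) + 2 * (#Wᶜ * Fintype.card V) := by
  have hsplit : ∑ v ∈ W, (#(R.nbrsIn W v) + #(Rᶜ.nbrsIn W v)) = #W * (#W - 1) := by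
    rw [sum_congr rfl fun v hv => ?_, sum_const, smul_eq_mul]
    rw [← nbrsIn_erase_self, ← nbrsIn_erase_self Rᶜ,
      card_nbrsIn_add_card_nbrsIn_compl _ (notMem_erase _ _), card_erase_of_mem hv]
  have hred : ∑ v ∈ W, #(R.nbrsIn W v) ≤ ∑ v, #(R.nbrsIn univ v) :=
    (sum_le_sum fun v _ => card_le_card fun u hu =>
      mem_nbrsIn.2 ⟨mem_univ u, (mem_nbrsIn.1 hu).2⟩).trans (sum_le_sum_of_subset (subset_univ W))
  have hblueW : ∑ v ∈ W, #(Rᶜ.nbrsIn univ v) ≤ ∑ v ∈ W, #(Rᶜ.nbrsIn W v) + #W * #Wᶜ := by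
    rw [← smul_eq_mul, ← sum_const, ← sum_add_distrib]
    exact sum_le_sum fun v _ => Rᶜ.card_nbrsIn_univ_le W v
  have hblueWc : ∑ v ∈ Wᶜ, #(Rᶜ.nbrsIn univ v) ≤ #Wᶜ * Fintype.card V := by
    rw [← smul_eq_mul, ← sum_const]
    exact sum_le_sum fun v _ => (card_le_card (nbrsIn_subset _ _)).trans_eq card_univ
  have hW : #W * #Wᶜ ≤ #Wᶜ * Fintype.card V := by
    rw [mul_comm]; exact Nat.mul_le_mul_left _ (card_le_univ W)
  have hblue := sum_add_sum_compl W fun v => #(Rᶜ.nbrsIn univ v)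
  rw [sum_add_distrib] at hsplit
  omega

lemma card_compl_filter_card_compl_nbrsIn_lt_le (hnp : ¬ ContainsUnavoidable R t)
    {Z : Finset V} (hZ : R.IsClique (Z : Set V)) (hZcard : #Z = t * t) :
    #({v | v ∉ Z ∧ #(Rᶜ.nbrsIn Z v) < t} : Finset V)ᶜ ≤
      t * t + (t * t).choose t * (t + t).choose t := by
  have hsub : ({v | v ∉ Z ∧ #(Rᶜ.nbrsIn Z v) < t} : Finset V)ᶜ ⊆
      Z ∪ ({v | t ≤ #(Rᶜ.nbrsIn Z v)} : Finset V) := fun v hv => by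
    simp only [mem_compl, mem_filter, mem_univ, true_and, not_and, not_lt] at hv
    by_cases hvZ : v ∈ Z
    · exact mem_union_left _ hvZ
    · exact mem_union_right _ (mem_filter.2 ⟨mem_univ _, hv hvZ⟩)
  have hfew := card_filter_le_card_compl_nbrsIn_le hnp hZ
  rw [hZcard] at hfew
  have := (card_le_card hsub).trans (card_union_le _ _)
  omega

variable (t) in
/-- `8` and `8 ^ (t + t).choose t` come from the Kővári–Sós–Turán count at density `1 / 8`. -/
def redCliqueThreshold : ℕ :=
  8 * (t * t + (t * t).choose t * (t + t).choose t + (t + t).choose t + 2) +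
    8 ^ (t + t).choose t * (t + t).choose t

theorem cliqueFree_mul_self_of_not_containsUnavoidable (hnp : ¬ ContainsUnavoidable R t)
    (hdeg : ∑ v, #(R.nbrsIn univ v) ≤ ∑ v, #(Rᶜ.nbrsIn univ v))
    (hn : redCliqueThreshold t ≤ Fintype.card V) : R.CliqueFree (t * t) := by
  rintro Z ⟨hZ, hZcard⟩
  set N := (t + t).choose t
  set M := t * t + (t * t).choose t * N
  set W : Finset V := {v | v ∉ Z ∧ #(Rᶜ.nbrsIn Z v) < t}
  have hWc : #Wᶜ ≤ M := card_compl_filter_card_compl_nbrsIn_lt_le hnp hZ hZcard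
  have hfree : ∀ Y ⊆ W, #Y = t → ¬ Rᶜ.IsClique (Y : Set V) := fun Y hYW hY =>
    not_isClique_compl_of_card_nbrsIn_compl_lt hnp hZ hZcard hY
      (disjoint_left.2 fun _ hy => (mem_filter.1 (hYW hy)).2.1)
      fun _ hy => (mem_filter.1 (hYW hy)).2.2
  have hn' : 8 * (M + N + 2) + 8 ^ N * N ≤ #W + #Wᶜ := by rw [card_add_card_compl]; exact hn
  set e := ∑ v ∈ W, #(Rᶜ.nbrsIn W v)
  have hdense : #W * #W ≤ 2 * e + 2 * (#Wᶜ * (#W + #Wᶜ)) + #W := by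
    have hcount := card_mul_pred_le_sum_card_compl_nbrsIn hdeg W
    rw [Nat.mul_sub_one, ← card_add_card_compl W] at hcount
    have := Nat.le_mul_self #W
    omega
  have hsum : 1 / 8 * #W * #W + N * #W ≤ ∑ v ∈ W, (#(Rᶜ.nbrsIn W v) : ℝ) := by
    have hc : 7 * #Wᶜ + 8 * N + 16 ≤ #W := by omega
    rw [← Nat.cast_sum]
    have hdenseR : (#W : ℝ) * #W ≤ 2 * e + 2 * (#Wᶜ * (#W + #Wᶜ)) + #W := by exact_mod_cast hdense
    have hcR : 7 * (#Wᶜ : ℝ) + 8 * N + 16 ≤ #W := by exact_mod_cast hc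
    nlinarith [mul_nonneg (Nat.cast_nonneg (α := ℝ) #W) (Nat.cast_nonneg (α := ℝ) #Wᶜ)]
  have hr : ((N - 1 : ℕ) : ℝ) < (1 / 8) ^ N * #W := by
    have h8 : 8 ^ N * N < #W := by omega
    rw [one_div, inv_pow, inv_mul_eq_div, lt_div_iff₀ (by positivity)]
    calc ((N - 1 : ℕ) : ℝ) * 8 ^ N ≤ N * 8 ^ N := by gcongr; exact Nat.sub_le _ _
      _ < #W := by rw [mul_comm]; exact_mod_cast h8
  obtain ⟨S, hSW, hS, hST⟩ := Rᶜ.exists_card_commonNbrsIn_gt W W (m := N) (r := N - 1)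
    (Nat.choose_pos (by omega)) (δ := 1 / 8) (by norm_num) hsum hr
  exact hnp (containsUnavoidable_of_compl_isCompleteBetween hS.ge (by omega)
    (fun Y hY => hfree Y (hY.trans hSW))
    (fun Y hY => hfree Y (hY.trans (commonNbrsIn_subset _ _)))
    (isCompleteBetween_commonNbrsIn _ _ _).symm)

theorem card_filter_le_card_nbrsIn_lt (hnp : ¬ ContainsUnavoidable R t)
    (hdeg : ∑ v, #(R.nbrsIn univ v) ≤ ∑ v, #(Rᶜ.nbrsIn univ v)) {ε : ℝ} (hε : 0 < ε) {K : ℕ}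
    (hK : 2 * (t + t).choose t ≤ K * ε) (hn : redCliqueThreshold t ≤ Fintype.card V)
    (hn' : (t * t + t).choose (t * t) < (ε / 2) ^ (t + t).choose t * Fintype.card V) :
    #({v | ε * Fintype.card V ≤ #(R.nbrsIn univ v)} : Finset V) < K := by
  set N := (t + t).choose t
  by_contra! hD
  obtain ⟨D, hDsub, hDcard⟩ := exists_subset_card_eq hD
  have hsum : ε / 2 * #D * #(univ : Finset V) + N * #(univ : Finset V) ≤
      ∑ b, (#(R.nbrsIn D b) : ℝ) := by
    have hlow : K * (ε * Fintype.card V) ≤ ∑ b, (#(R.nbrsIn D b) : ℝ) :=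
      calc K * (ε * Fintype.card V) = ∑ _a ∈ D, ε * Fintype.card V := by
            rw [sum_const, hDcard, nsmul_eq_mul]
        _ ≤ ∑ a ∈ D, (#(R.nbrsIn univ a) : ℝ) :=
            sum_le_sum fun a ha => (mem_filter.1 (hDsub ha)).2
        _ = ∑ b, (#(R.nbrsIn D b) : ℝ) := by exact_mod_cast (R.sum_card_nbrsIn_comm D univ).symm
    rw [card_univ, hDcard]
    nlinarith [(Nat.cast_nonneg (Fintype.card V) : (0 : ℝ) ≤ _)]
  obtain ⟨T, -, hT, hU⟩ := R.exists_card_commonNbrsIn_gt D univ (m := N)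
    (r := (t * t + t).choose (t * t)) (Nat.choose_pos (by omega)) (by positivity) hsum
    (by rwa [card_univ])
  rcases R.exists_isClique_or_compl_isClique (t * t) t _ hU.le with
    ⟨Z, -, hZ, hZc⟩ | ⟨Y, hYU, hY, hYc⟩
  · exact cliqueFree_mul_self_of_not_containsUnavoidable hnp hdeg hn Z ⟨hZc, hZ⟩
  · have hYT : Rᶜᶜ.IsCompleteBetween (Y : Set V) (T : Set V) := by
      rw [compl_compl]
      exact fun _ hy _ hb => (mem_commonNbrsIn.1 (hYU hy)).2 _ hb
    have := card_lt_of_isCompleteBetween hnp (Or.inr rfl) hY hYc hYT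
    omega

end Counting

lemma card_sub_card_le_ncard_compl_adj {V : Type*} [Fintype V] (R : SimpleGraph V)
    (S : Finset V) (v : V) :
    Fintype.card V - #S ≤ {u | u ∉ S ∧ Rᶜ.Adj v u}.ncard + #(R.nbrsIn univ v) + 1 := by
  have hset : {u | u ∉ S ∧ Rᶜ.Adj v u} = (({u | u ∉ S ∧ Rᶜ.Adj v u} : Finset V) : Set V) := by
    ext; simp
  rw [hset, Set.ncard_coe_finset]
  have hsub : Sᶜ ⊆ ({u | u ∉ S ∧ Rᶜ.Adj v u} : Finset V) ∪ R.nbrsIn univ v ∪ {v} := by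
    intro u hu
    by_cases huv : u = v
    · simp [huv]
    by_cases hadj : R.Adj v u
    · simp [hadj]
    · simp_all [compl_adj, Ne.symm huv]
  have h₁ := card_le_card hsub
  have h₂ := card_union_le (({u | u ∉ S ∧ Rᶜ.Adj v u} : Finset V) ∪ R.nbrsIn univ v) {v}
  have h₃ := card_union_le ({u | u ∉ S ∧ Rᶜ.Adj v u} : Finset V) (R.nbrsIn univ v)
  rw [card_compl, card_singleton] at *
  omega

lemma one_sub_two_mul_mul_le_ncard_compl_adj {V : Type*} [Fintype V] (R : SimpleGraph V)
    (S : Finset V) (v : V) {ε : ℝ} (hred : #(R.nbrsIn univ v) < ε * Fintype.card V)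
    (hS : 2 * ε * #S + 1 ≤ ε * Fintype.card V) :
    (1 - 2 * ε) * ((Fintype.card V - #S : ℕ) : ℝ) ≤ {u | u ∉ S ∧ Rᶜ.Adj v u}.ncard := by
  have hcount := card_sub_card_le_ncard_compl_adj R S v
  have hcountR : (Fintype.card V : ℝ) - #S ≤
      {u | u ∉ S ∧ Rᶜ.Adj v u}.ncard + #(R.nbrsIn univ v) + 1 := by
    rw [sub_le_iff_le_add]; exact_mod_cast (by omega : Fintype.card V ≤ _ + #S)
  rw [Nat.cast_sub (card_le_univ S)]
  nlinarith

theorem statement8_general (t : ℕ) (ε : ℝ) (hε : 0 < ε) :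
    ∃ C₁ : ℝ, ∀ (n : ℕ) (R : SimpleGraph (Fin n)),
      R.edgeSet.ncard ≤ Rᶜ.edgeSet.ncard →
      ¬ ContainsUnavoidable R t →
      ∃ S : Finset (Fin n), (S.card : ℝ) ≤ C₁ ∧
        ∀ v : Fin n, v ∉ S →
          (1 - 2 * ε) * ((n - S.card : ℕ) : ℝ) ≤
            (({u : Fin n | u ∉ S ∧ Rᶜ.Adj v u}).ncard : ℝ) := by
  set N := (t + t).choose t
  set K := ⌈2 * N / ε⌉₊
  set n₀ := redCliqueThreshold t + ⌈(t * t + t).choose (t * t) * (2 / ε) ^ N⌉₊ + 2 * K +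
    ⌈1 / ε⌉₊ + 1
  refine ⟨n₀ + K, fun n R hedge hnp => ?_⟩
  rcases lt_or_ge n n₀ with hsmall | hlarge
  · refine ⟨univ, ?_, fun v hv => absurd (mem_univ v) hv⟩
    rw [card_univ, Fintype.card_fin]
    exact_mod_cast (by omega : n ≤ n₀ + K)
  have hK : 2 * N ≤ K * ε := (div_le_iff₀ hε).1 (Nat.le_ceil _)
  have hNs : ((t * t + t).choose (t * t) : ℝ) < (ε / 2) ^ N * n := by
    rw [← div_lt_iff₀' (by positivity), div_eq_mul_inv, ← inv_pow, inv_div]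
    exact (Nat.le_ceil _).trans_lt (by exact_mod_cast (by omega : _ < n))
  set D : Finset (Fin n) := {v | ε * n ≤ #(R.nbrsIn univ v)}
  have hD : #D < K := by
    simpa only [Fintype.card_fin] using card_filter_le_card_nbrsIn_lt hnp
      (R.sum_card_nbrsIn_univ_le_compl hedge) hε hK (by rw [Fintype.card_fin]; omega)
      (by rwa [Fintype.card_fin])
  refine ⟨D, by exact_mod_cast (by omega : #D ≤ n₀ + K), fun v hv => ?_⟩
  have hnD : 2 * ε * #D + 1 ≤ ε * n := by
    have hceil : 1 ≤ ε * ⌈1 / ε⌉₊ := by rw [← div_le_iff₀' hε]; exact Nat.le_ceil _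
    have hDK : (#D : ℝ) ≤ K := by exact_mod_cast hD.le
    have hnK : 2 * (K : ℝ) + ⌈1 / ε⌉₊ ≤ n := by exact_mod_cast (by omega : 2 * K + ⌈1 / ε⌉₊ ≤ n)
    nlinarith
  simpa only [Fintype.card_fin] using one_sub_two_mul_mul_le_ncard_compl_adj R D v
    (by simpa [D] using hv) (by rwa [Fintype.card_fin])

/-- **Claim.** For `t ≥ 3` and `ε > 0` there is `C₁ = C₁(t, ε)` such that: if `K_n` is
red/blue coloured with at least as many blue edges as red ones and with no unavoidable
`t`-colouring, then some set `S` of at most `C₁` vertices can be removed so that in the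
remaining complete graph on `n' = n - |S|` vertices every vertex is incident to at least
`(1 - 2ε)n'` blue edges. -/
theorem statement8 (t : ℕ) (ht : 3 ≤ t) (ε : ℝ) (hε : 0 < ε) :
    ∃ C₁ : ℝ, ∀ (n : ℕ) (R : SimpleGraph (Fin n)),
      R.edgeSet.ncard ≤ Rᶜ.edgeSet.ncard →
      ¬ ContainsUnavoidable R t →
      ∃ S : Finset (Fin n), (S.card : ℝ) ≤ C₁ ∧
        ∀ v : Fin n, v ∉ S →
          (1 - 2 * ε) * ((n - S.card : ℕ) : ℝ) ≤
            (({u : Fin n | u ∉ S ∧ Rᶜ.Adj v u}).ncard : ℝ) :=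
  statement8_general t ε hε
end

section
/- Let t ≥ 3 be an integer and set r = ⌈t/2⌉. Let H be a bipartite graph with vertex classes A and B that contains no copy of K_{r,t} (in either orientation: no r vertices of one class with t common neighbours in the other). Define a tournament T on vertex set A ∪ B as follows: fix linear orders on A and on B; within A and within B all edges are directed from the smaller to the larger vertex (so T[A] and T[B] are transitive); for each edge ab of H with a ∈ A and b ∈ B, the edge of T between a and b is directed from b to a; every other edge between A and B is directed from A to B. Then T contains no copy of the unavoidable t-tournament 𝒰_t. -/
/-- The tournament on `A ∪ B` built from a bipartite graph `H` between `A = Fin a` and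
`B = Fin b`: within `A` and within `B` edges follow the linear orders (so both classes are
transitive); an edge of `H` between `x ∈ A` and `y ∈ B` is directed from `y` to `x`, and
every other edge between the classes is directed from `A` to `B`. -/
def bipTournament (a b : ℕ) (H : Fin a → Fin b → Prop) (x y : Fin a ⊕ Fin b) : Prop :=
  match x, y with
  | Sum.inl u, Sum.inl v => u < v
  | Sum.inr u, Sum.inr v => u < v
  | Sum.inl u, Sum.inr v => ¬ H u v
  | Sum.inr v, Sum.inl u => H u v

/-- The bipartite graph `H` between `Fin a` and `Fin b` contains no copy of `K_{r,t}`
(in either orientation). -/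
def NoKrt {a b : ℕ} (H : Fin a → Fin b → Prop) (r t : ℕ) : Prop :=
  (¬ ∃ (A : Finset (Fin a)) (B : Finset (Fin b)),
      A.card = r ∧ B.card = t ∧ ∀ x ∈ A, ∀ y ∈ B, H x y) ∧
  (¬ ∃ (A : Finset (Fin a)) (B : Finset (Fin b)),
      A.card = t ∧ B.card = r ∧ ∀ x ∈ A, ∀ y ∈ B, H x y)

/-- **Claim.** For `t ≥ 3` and `r = ⌈t/2⌉`, if the bipartite graph `H` contains no copy of
`K_{r,t}`, then the associated tournament contains no copy of the unavoidable
`t`-tournament `𝒰_t`. -/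
theorem statement10 (t : ℕ) (ht : 3 ≤ t) (a b : ℕ) (H : Fin a → Fin b → Prop)
    (hH : NoKrt H ((t + 1) / 2) t) :
    ¬ ContainsU (bipTournament a b H) t := by
  classical
  rintro ⟨f, hinj, hf⟩
  set r := (t + 1) / 2 with hr
  have hedge : ∀ (i : Fin 3) (j j' : Fin t),
      bipTournament a b H (f (i, j)) (f (i + 1, j')) :=
    fun i j j' => hf (i, j) (i + 1, j') (Or.inr rfl)
  -- some class is fully in B
  have hA : ∃ i : Fin 3, ∀ j : Fin t, ∃ v, f (i, j) = Sum.inr v := by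
    by_contra h
    push_neg at h
    have h' : ∀ i : Fin 3, ∃ j u, f (i, j) = Sum.inl u := by
      intro i
      obtain ⟨j, hj⟩ := h i
      cases hfe : f (i, j) with
      | inl u => exact ⟨j, u, hfe⟩
      | inr v => exact absurd hfe (hj v)
    obtain ⟨j0, u0, h0⟩ := h' 0
    obtain ⟨j1, u1, h1⟩ := h' 1
    obtain ⟨j2, u2, h2⟩ := h' 2
    have e01 := hedge 0 j0 j1
    have e12 := hedge 1 j1 j2
    have e20 := hedge 2 j2 j0
    have e1 : (0 : Fin 3) + 1 = 1 := by decide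
    have e2 : (1 : Fin 3) + 1 = 2 := by decide
    have e3 : (2 : Fin 3) + 1 = 0 := by decide
    rw [e1, h0, h1] at e01
    rw [e2, h1, h2] at e12
    rw [e3, h2, h0] at e20
    have l01 : u0 < u1 := e01
    have l12 : u1 < u2 := e12
    have l20 : u2 < u0 := e20
    exact absurd ((l01.trans l12).trans l20) (lt_irrefl _)
  -- some class is fully in A
  have hB : ∃ i : Fin 3, ∀ j : Fin t, ∃ u, f (i, j) = Sum.inl u := by
    by_contra h
    push_neg at h
    have h' : ∀ i : Fin 3, ∃ j v, f (i, j) = Sum.inr v := by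
      intro i
      obtain ⟨j, hj⟩ := h i
      cases hfe : f (i, j) with
      | inl u => exact absurd hfe (hj u)
      | inr v => exact ⟨j, v, hfe⟩
    obtain ⟨j0, u0, h0⟩ := h' 0
    obtain ⟨j1, u1, h1⟩ := h' 1
    obtain ⟨j2, u2, h2⟩ := h' 2
    have e01 := hedge 0 j0 j1
    have e12 := hedge 1 j1 j2
    have e20 := hedge 2 j2 j0
    have e1 : (0 : Fin 3) + 1 = 1 := by decide
    have e2 : (1 : Fin 3) + 1 = 2 := by decide
    have e3 : (2 : Fin 3) + 1 = 0 := by decide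
    rw [e1, h0, h1] at e01
    rw [e2, h1, h2] at e12
    rw [e3, h2, h0] at e20
    have l01 : u0 < u1 := e01
    have l12 : u1 < u2 := e12
    have l20 : u2 < u0 := e20
    exact absurd ((l01.trans l12).trans l20) (lt_irrefl _)
  obtain ⟨iB, hiB⟩ := hA
  obtain ⟨iA, hiA⟩ := hB
  choose gB hgB using hiB
  choose gA hgA using hiA
  have j0 : Fin t := ⟨0, by omega⟩
  have hgAinj : Function.Injective gA := by
    intro j j' h
    have : f (iA, j) = f (iA, j') := by rw [hgA, hgA, h]
    exact (Prod.mk.injEq .. ▸ (hinj this)).2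
  have hgBinj : Function.Injective gB := by
    intro j j' h
    have : f (iB, j) = f (iB, j') := by rw [hgB, hgB, h]
    exact (Prod.mk.injEq .. ▸ (hinj this)).2
  have cardA : (Finset.univ.image gA).card = t := by
    rw [Finset.card_image_of_injective _ hgAinj, Finset.card_univ, Fintype.card_fin]
  have cardB : (Finset.univ.image gB).card = t := by
    rw [Finset.card_image_of_injective _ hgBinj, Finset.card_univ, Fintype.card_fin]
  have hne : iA ≠ iB := by
    intro h
    have h1 := hgA j0
    have h2 := hgB j0
    rw [h, h2] at h1
    simp at h1
  have h3 : ∀ x y : Fin 3, x ≠ y → y = x + 1 ∨ x = y + 1 := by decide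
  have hrt : r ≤ t := by omega
  rcases h3 iA iB hne with hc | hc
  · -- iB = iA + 1 : mixed case with class m = iA + 2
    set m : Fin 3 := iA + 2 with hm
    have key1 : ∀ i : Fin 3, i + 2 + 1 = i := by decide
    have key2 : ∀ i : Fin 3, i + 1 + 1 = i + 2 := by decide
    have hm1 : m + 1 = iA := by rw [hm]; exact key1 iA
    have hm2 : iB + 1 = m := by rw [hm, hc]; exact key2 iA
    -- split class m into its A-part and B-part
    set gm : Fin t → Fin a ⊕ Fin b := fun j => f (m, j) with hgm
    have hgminj : Function.Injective gm := by
      intro j j' h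
      exact (Prod.mk.injEq .. ▸ (hinj h)).2
    set U : Finset (Fin a ⊕ Fin b) := Finset.univ.image gm with hU
    have cardU : U.card = t := by
      rw [hU, Finset.card_image_of_injective _ hgminj, Finset.card_univ, Fintype.card_fin]
    have hsplit : U.toLeft.card + U.toRight.card = t := by
      rw [Finset.card_toLeft_add_card_toRight, cardU]
    have hbig : r ≤ U.toLeft.card ∨ r ≤ U.toRight.card := by omega
    rcases hbig with hbig | hbig
    · -- A-part of class m is big; edges iB → m give K_{r,t}
      obtain ⟨A', hA'sub, hA'card⟩ := Finset.exists_subset_card_eq hbig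
      refine hH.1 ⟨A', Finset.univ.image gB, hA'card, cardB, ?_⟩
      intro x hx y hy
      have hxU : Sum.inl x ∈ U := Finset.mem_toLeft.mp (hA'sub hx)
      rw [hU, Finset.mem_image] at hxU
      obtain ⟨j', -, hj'⟩ := hxU
      rw [Finset.mem_image] at hy
      obtain ⟨j, -, hj⟩ := hy
      have e := hedge iB j j'
      rw [hm2, hgB j] at e
      have hj'' : f (m, j') = Sum.inl x := hj'
      rw [hj''] at e
      rw [← hj]
      exact e
    · -- B-part of class m is big; edges m → iA give K_{t,r}
      obtain ⟨B', hB'sub, hB'card⟩ := Finset.exists_subset_card_eq hbig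
      refine hH.2 ⟨Finset.univ.image gA, B', cardA, hB'card, ?_⟩
      intro x hx y hy
      have hyU : Sum.inr y ∈ U := Finset.mem_toRight.mp (hB'sub hy)
      rw [hU, Finset.mem_image] at hyU
      obtain ⟨j', -, hj'⟩ := hyU
      rw [Finset.mem_image] at hx
      obtain ⟨j, -, hj⟩ := hx
      have e := hedge m j' j
      rw [hm1, hgA j] at e
      have hj'' : f (m, j') = Sum.inr y := hj'
      rw [hj''] at e
      rw [← hj]
      exact e
  · -- iA = iB + 1 : edges iB → iA give K_{t,t}
    obtain ⟨B', hB'sub, hB'card⟩ := Finset.exists_subset_card_eq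
      (show r ≤ (Finset.univ.image gB).card by rw [cardB]; exact hrt)
    refine hH.2 ⟨Finset.univ.image gA, B', cardA, hB'card, ?_⟩
    intro x hx y hy
    rw [Finset.mem_image] at hx
    obtain ⟨j', -, hj'⟩ := hx
    obtain ⟨j, -, hj⟩ := Finset.mem_image.mp (hB'sub hy)
    have e := hedge iB j j'
    rw [← hc, hgB j, hgA j'] at e
    rw [← hj, ← hj']
    exact e
end

section
/- Let t ≥ 3 be an integer and set ε = 1/(100t²). There exists M = M(t) such that the following holds for all m ≥ M. Let T' be a tournament on m vertices containing no copy of the unavoidable t-tournament 𝒰_t, let σ be an ordering of V(T') minimising the number of backward edges, and suppose no vertex of T' is incident to more than 2εm backward edges in σ. Then there do not exist two disjoint t-sets A, B ⊆ V(T') such that every vertex of A precedes every vertex of B in σ, the induced subtournaments T'[A] and T'[B] are both transitive, and all t² edges between A and B are backward edges in σ of length at least m/20 (i.e., directed from B to A). -/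
open Finset

section Tournament

variable {V : Type*} {T : V → V → Prop}

namespace IsTournament

theorem not_adj_of_adj (hT : IsTournament T) {x y : V} (h : T x y) : ¬ T y x :=
  (hT.2 x y fun hxy => hT.1 x (hxy ▸ h)).1 h

theorem adj_of_not_adj (hT : IsTournament T) {x y : V} (hne : x ≠ y) (h : ¬ T x y) : T y x :=
  not_not.1 (mt (hT.2 x y hne).2 h)

theorem reverse (hT : IsTournament T) : IsTournament fun x y => T y x :=
  ⟨hT.1, fun x y hne => hT.2 y x hne.symm⟩

end IsTournament

def IsTransitiveOn (T : V → V → Prop) (S : Finset V) : Prop :=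
  ∀ x ∈ S, ∀ y ∈ S, ∀ z ∈ S, T x y → T y z → T x z

namespace IsTransitiveOn

theorem reverse {S : Finset V} (h : IsTransitiveOn T S) : IsTransitiveOn (fun x y => T y x) S :=
  fun x hx y hy z hz hxy hyz => h z hz y hy x hx hyz hxy

theorem mono {R S : Finset V} (h : IsTransitiveOn T S) (hRS : R ⊆ S) : IsTransitiveOn T R :=
  fun x hx y hy z hz => h x (hRS hx) y (hRS hy) z (hRS hz)

theorem insert [DecidableEq V] (hT : IsTournament T) {S : Finset V} {v : V}
    (h : IsTransitiveOn T S) (hv : ∀ u ∈ S, T v u) : IsTransitiveOn T (insert v S) := by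
  intro x hx y hy z hz hxy hyz
  have hS : ∀ u ∈ S, ¬ T u v := fun u hu => hT.not_adj_of_adj (hv u hu)
  rcases mem_insert.1 hx with rfl | hx
  · rcases mem_insert.1 hz with rfl | hz
    · exact absurd hyz (hT.not_adj_of_adj hxy)
    · exact hv z hz
  · have hy : y ∈ S := (mem_insert.1 hy).resolve_left fun hyv => hS x hx (hyv ▸ hxy)
    have hz : z ∈ S := (mem_insert.1 hz).resolve_left fun hzv => hS y hy (hzv ▸ hyz)
    exact h x hx y hy z hz hxy hyz

end IsTransitiveOn

namespace IsTournament

/-- The Erdős–Moser bound. -/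
theorem exists_isTransitiveOn_of_two_pow_le (hT : IsTournament T) {n : ℕ} {S : Finset V}
    (hS : 2 ^ n ≤ #S) : ∃ C ⊆ S, #C = n + 1 ∧ IsTransitiveOn T C := by
  classical
  induction n generalizing T S with
  | zero =>
    obtain ⟨v, hv⟩ := card_pos.1 (by simpa using hS)
    refine ⟨{v}, singleton_subset_iff.2 hv, rfl, ?_⟩
    simp only [IsTransitiveOn, mem_singleton]
    rintro _ rfl _ rfl _ rfl h
    exact absurd h (hT.1 _)
  | succ n ih =>
    obtain ⟨v, hv⟩ := card_pos.1 (lt_of_lt_of_le (by positivity) hS)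
    have extend : ∀ R : V → V → Prop, IsTournament R → 2 ^ n ≤ #((S.erase v).filter (R v)) →
        ∃ C ⊆ S, #C = n + 1 + 1 ∧ IsTransitiveOn R C := by
      intro R hR hR'
      obtain ⟨C, hCS, hC, hCR⟩ := ih hR hR'
      have hvC : v ∉ C := fun h => by simpa using hCS h
      refine ⟨Insert.insert v C, insert_subset hv fun u hu => mem_of_mem_erase (filter_subset _ _
        (hCS hu)), by rw [card_insert_of_notMem hvC, hC], hCR.insert hR fun u hu => ?_⟩
      exact (mem_filter.1 (hCS hu)).2
    have hsplit : #(S.erase v) ≤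
        #((S.erase v).filter (T v)) + #((S.erase v).filter fun u => T u v) := by
      rw [← card_filter_add_card_filter_not (s := S.erase v) (T v)]
      gcongr with u hu
      exact hT.adj_of_not_adj (ne_of_mem_erase hu).symm
    rcases le_or_gt (2 ^ n) #((S.erase v).filter (T v)) with hout | hout
    · exact extend T hT hout
    · have hin : 2 ^ n ≤ #((S.erase v).filter fun u => T u v) := by
        rw [card_erase_of_mem hv] at hsplit
        rw [pow_succ] at hS
        omega
      obtain ⟨C, hCS, hC, hCT⟩ := extend _ hT.reverse hin
      exact ⟨C, hCS, hC, hCT.reverse⟩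

theorem exists_source (hT : IsTournament T) {C : Finset V} (hC : C.Nonempty)
    (htr : IsTransitiveOn T C) : ∃ v ∈ C, ∀ u ∈ C, u ≠ v → T v u := by
  classical
  obtain ⟨v, hv, hmax⟩ := C.exists_max_image (fun v => #(C.filter (T v))) hC
  refine ⟨v, hv, fun u hu huv => by_contra fun hvu => ?_⟩
  have huv' : T u v := hT.adj_of_not_adj huv.symm hvu
  have hsub : Insert.insert v (C.filter (T v)) ⊆ C.filter (T u) := by
    refine insert_subset (mem_filter.2 ⟨hv, huv'⟩) fun w hw => ?_
    obtain ⟨hwC, hvw⟩ := mem_filter.1 hw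
    exact mem_filter.2 ⟨hwC, htr u hu v hv w hwC huv' hvw⟩
  have := card_le_card hsub
  rw [card_insert_of_notMem fun h => hT.1 v (mem_filter.1 h).2] at this
  exact absurd (hmax u hu) (by omega)

theorem exists_chain (hT : IsTournament T) {t : ℕ} {C : Finset V} (hC : #C = t)
    (htr : IsTransitiveOn T C) :
    ∃ e : Fin t → V, (∀ i, e i ∈ C) ∧ ∀ i j, i < j → T (e i) (e j) := by
  classical
  induction t generalizing C with
  | zero => exact ⟨Fin.elim0, fun i => i.elim0, fun i => i.elim0⟩
  | succ t ih =>
    obtain ⟨v, hv, hsrc⟩ := hT.exists_source (card_pos.1 (by omega)) htr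
    obtain ⟨e, heC, he⟩ := ih (by rw [card_erase_of_mem hv, hC]; rfl)
      (htr.mono (erase_subset v C))
    refine ⟨Fin.cons v e, Fin.cases hv fun i => mem_of_mem_erase (heC i), fun i j hij => ?_⟩
    induction j using Fin.cases with
    | zero => exact absurd hij (Fin.not_lt_zero i)
    | succ j =>
      induction i using Fin.cases with
      | zero => exact hsrc _ (mem_of_mem_erase (heC j)) (ne_of_mem_erase (heC j))
      | succ i => exact he i j (Fin.succ_lt_succ_iff.1 hij)

end IsTournament

theorem containsU_of_chains (hirr : ∀ x, ¬ T x x) {t : ℕ} (e : Fin 3 → Fin t → V)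
    (hchain : ∀ k i j, i < j → T (e k i) (e k j)) (hnext : ∀ k i j, T (e k i) (e (k + 1) j)) :
    ContainsU T t := by
  refine ⟨fun p => e p.1 p.2, ?_, ?_⟩
  · rintro ⟨k, i⟩ ⟨l, j⟩ (h : e k i = e l j)
    by_cases hkl : k = l
    · subst hkl
      rcases lt_trichotomy i j with hij | rfl | hij
      · exact absurd (h ▸ hchain k i j hij) (hirr _)
      · rfl
      · exact absurd (h ▸ hchain k j i hij) (hirr _)
    · have hcyc : ∀ k l : Fin 3, k ≠ l → l = k + 1 ∨ k = l + 1 := by decide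
      rcases hcyc k l hkl with rfl | rfl
      · exact absurd (h ▸ hnext k i j) (hirr _)
      · exact absurd (h ▸ hnext l j i) (hirr _)
  · rintro ⟨k, i⟩ ⟨l, j⟩ (⟨rfl, hij⟩ | rfl)
    exacts [hchain k i j hij, hnext k i j]

theorem IsTournament.containsU_of_cycle (hT : IsTournament T) {t : ℕ} {A B C : Finset V}
    (hA : #A = t) (hB : #B = t) (hC : #C = t)
    (htA : IsTransitiveOn T A) (htB : IsTransitiveOn T B) (htC : IsTransitiveOn T C)
    (hAB : ∀ a ∈ A, ∀ b ∈ B, T a b) (hBC : ∀ b ∈ B, ∀ c ∈ C, T b c)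
    (hCA : ∀ c ∈ C, ∀ a ∈ A, T c a) : ContainsU T t := by
  obtain ⟨eA, heA, hchA⟩ := hT.exists_chain hA htA
  obtain ⟨eB, heB, hchB⟩ := hT.exists_chain hB htB
  obtain ⟨eC, heC, hchC⟩ := hT.exists_chain hC htC
  refine containsU_of_chains hT.1 ![eA, eB, eC] (fun k => ?_) fun k i j => ?_ <;> fin_cases k
  exacts [hchA, hchB, hchC, hAB _ (heA i) _ (heB j), hBC _ (heB i) _ (heC j),
    hCA _ (heC i) _ (heA j)]

end Tournament

theorem card_le_card_add_sum_add_sum {α ι κ : Type*} {I G : Finset α} (A : Finset ι)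
    (B : Finset κ) (P : ι → α → Prop) (Q : κ → α → Prop) [∀ x c, Decidable (P x c)]
    [∀ y c, Decidable (Q y c)]
    (hG : ∀ c ∈ I, (∀ x ∈ A, P x c) → (∀ y ∈ B, Q y c) → c ∈ G) :
    #I ≤ #G + ∑ x ∈ A, #(I.filter fun c => ¬ P x c) + ∑ y ∈ B, #(I.filter fun c => ¬ Q y c) := by
  classical
  calc #I ≤ #(G ∪ A.biUnion (fun x => I.filter fun c => ¬ P x c) ∪
        B.biUnion (fun y => I.filter fun c => ¬ Q y c)) := by
        refine card_le_card fun c hc => ?_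
        simp only [mem_union, mem_biUnion, mem_filter, hc, true_and]
        by_cases hP : ∀ x ∈ A, P x c
        · by_cases hQ : ∀ y ∈ B, Q y c
          · exact Or.inl (Or.inl (hG c hc hP hQ))
          · push Not at hQ
            exact Or.inr hQ
        · push Not at hP
          exact Or.inl (Or.inr hP)
    _ ≤ _ := (card_union_le _ _).trans <| add_le_add
        ((card_union_le _ _).trans (Nat.add_le_add_left card_biUnion_le _)) card_biUnion_le

section Ordering

variable {m : ℕ} {T : Fin m → Fin m → Prop} {σ : Equiv.Perm (Fin m)}

def backNbrs (T : Fin m → Fin m → Prop) (σ : Equiv.Perm (Fin m)) (v : Fin m) : Set (Fin m) :=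
  {u | ((σ.symm u : ℕ) < (σ.symm v : ℕ) ∧ T v u) ∨ ((σ.symm v : ℕ) < (σ.symm u : ℕ) ∧ T u v)}

theorem card_le_ncard_backNbrs {v : Fin m} {I : Finset (Fin m)}
    (h : ∀ c ∈ I, c ∈ backNbrs T σ v) : #I ≤ (backNbrs T σ v).ncard := by
  rw [← Set.ncard_coe_finset]
  exact Set.ncard_le_ncard h

theorem IsTournament.card_Ioo_le_card_between [DecidableRel T] (hT : IsTournament T)
    {A B : Finset (Fin m)} {a b : Fin m} {β : ℝ} (hA : ∀ x ∈ A, σ.symm x ≤ a)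
    (hB : ∀ y ∈ B, b ≤ σ.symm y)
    (hdeg : ∀ v, ((backNbrs T σ v).ncard : ℝ) ≤ β) :
    (#(Ioo a b) : ℝ) ≤
      #(univ.filter fun c => (∀ x ∈ A, T x c) ∧ ∀ y ∈ B, T c y) + (#A + #B) * β := by
  set I := (Ioo a b).map σ.toEmbedding
  have hI : ∀ c ∈ I, a < σ.symm c ∧ σ.symm c < b := fun c hc => mem_Ioo.1 (mem_map_equiv.1 hc)
  have hbadA : ∀ x ∈ A, (#(I.filter fun c => ¬ T x c) : ℝ) ≤ β := by
    refine fun x hx => le_trans (Nat.cast_le.2 (card_le_ncard_backNbrs fun c hc => ?_)) (hdeg x)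
    obtain ⟨hcI, hxc⟩ := mem_filter.1 hc
    have hlt : σ.symm x < σ.symm c := (hA x hx).trans_lt (hI c hcI).1
    exact Or.inr ⟨hlt, hT.adj_of_not_adj (ne_of_apply_ne σ.symm hlt.ne) hxc⟩
  have hbadB : ∀ y ∈ B, (#(I.filter fun c => ¬ T c y) : ℝ) ≤ β := by
    refine fun y hy => le_trans (Nat.cast_le.2 (card_le_ncard_backNbrs fun c hc => ?_)) (hdeg y)
    obtain ⟨hcI, hcy⟩ := mem_filter.1 hc
    have hlt : σ.symm c < σ.symm y := (hI c hcI).2.trans_le (hB y hy)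
    exact Or.inl ⟨hlt, hT.adj_of_not_adj (ne_of_apply_ne σ.symm hlt.ne) hcy⟩
  have hcount := card_le_card_add_sum_add_sum A B (fun x c => T x c) (fun y c => T c y)
    (I := I) (G := univ.filter fun c => (∀ x ∈ A, T x c) ∧ ∀ y ∈ B, T c y)
    fun c _ hAc hcB => mem_filter.2 ⟨mem_univ c, hAc, hcB⟩
  calc (#(Ioo a b) : ℝ) = #I := by rw [card_map]
    _ ≤ #(univ.filter fun c => (∀ x ∈ A, T x c) ∧ ∀ y ∈ B, T c y) +
        ∑ x ∈ A, (#(I.filter fun c => ¬ T x c) : ℝ) +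
        ∑ y ∈ B, (#(I.filter fun c => ¬ T c y) : ℝ) := by exact_mod_cast hcount
    _ ≤ #(univ.filter fun c => (∀ x ∈ A, T x c) ∧ ∀ y ∈ B, T c y) +
        ∑ _x ∈ A, β + ∑ _y ∈ B, β := by
      gcongr with x hx y hy
      · exact hbadA x hx
      · exact hbadB y hy
    _ = _ := by rw [sum_const, sum_const, nsmul_eq_mul, nsmul_eq_mul]; ring

end Ordering

/-- **Claim.** Let `t ≥ 3` and `ε = 1/(100t²)`. There is `M = M(t)` such that for all
`m ≥ M`: if `T'` is an `m`-vertex tournament with no copy of `𝒰_t`, `σ` minimises the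
number of backward edges, and no vertex is incident to more than `2εm` backward edges,
then there is no pair of disjoint transitive `t`-sets `A < B` (in `σ`) all of whose `t²`
connecting edges are backward edges of length at least `m/20`. -/
theorem statement13 (t : ℕ) (ht : 3 ≤ t) :
    ∃ M : ℕ, ∀ m : ℕ, M ≤ m →
      ∀ T : Fin m → Fin m → Prop, IsTournament T →
        ¬ ContainsU T t →
        ∀ σ : Equiv.Perm (Fin m),
          (∀ τ : Equiv.Perm (Fin m), backCount T σ ≤ backCount T τ) →
          (∀ v : Fin m,
            (({u : Fin m | ((σ.symm u : ℕ) < (σ.symm v : ℕ) ∧ T v u) ∨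
                ((σ.symm v : ℕ) < (σ.symm u : ℕ) ∧ T u v)}).ncard : ℝ) ≤
              2 * (1 / (100 * (t : ℝ) ^ 2)) * (m : ℝ)) →
          ¬ ∃ A B : Finset (Fin m), Disjoint A B ∧ A.card = t ∧ B.card = t ∧
              (∀ x ∈ A, ∀ y ∈ B, (σ.symm x : ℕ) < (σ.symm y : ℕ)) ∧
              (∀ x ∈ A, ∀ y ∈ A, ∀ z ∈ A, T x y → T y z → T x z) ∧
              (∀ x ∈ B, ∀ y ∈ B, ∀ z ∈ B, T x y → T y z → T x z) ∧
              (∀ x ∈ A, ∀ y ∈ B, T y x ∧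
                (m : ℝ) / 20 ≤ ((σ.symm y : ℕ) : ℝ) - ((σ.symm x : ℕ) : ℝ)) := by
  classical
  refine ⟨100 * 2 ^ t, fun m hm T hT hU σ _ hdeg => ?_⟩
  rintro ⟨A, B, -, hA, hB, -, htA, htB, hedge⟩
  obtain ⟨x, hxA, hx⟩ := A.exists_max_image σ.symm (card_pos.1 (by omega))
  obtain ⟨y, hyB, hy⟩ := B.exists_min_image σ.symm (card_pos.1 (by omega))
  set G := univ.filter fun c => (∀ a ∈ A, T a c) ∧ ∀ b ∈ B, T c b
  have hG : 2 ^ t ≤ #G := by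
    have hmid := hT.card_Ioo_le_card_between hx hy hdeg
    rw [Fin.card_Ioo, hA, hB] at hmid
    have hgap := (hedge x hxA y hyB).2
    have hIoo :
        ((σ.symm y : ℕ) : ℝ) ≤ ((σ.symm y - σ.symm x - 1 : ℕ) : ℝ) + (σ.symm x : ℕ) + 1 := by
      exact_mod_cast (by omega : (σ.symm y : ℕ) ≤ (σ.symm y - σ.symm x - 1) + σ.symm x + 1)
    have htR : (3 : ℝ) ≤ t := by exact_mod_cast ht
    have hβ : ((t : ℝ) + t) * (2 * (1 / (100 * (t : ℝ) ^ 2)) * m) ≤ m / 75 := by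
      rw [show ((t : ℝ) + t) * (2 * (1 / (100 * (t : ℝ) ^ 2)) * m) = m / (25 * t) by
        field_simp; ring]
      exact div_le_div_of_nonneg_left m.cast_nonneg (by norm_num) (by linarith)
    have hmR : (100 : ℝ) * 2 ^ t ≤ m := by exact_mod_cast hm
    have h2t : (1 : ℝ) ≤ 2 ^ t := one_le_pow₀ (by norm_num)
    exact_mod_cast (by linarith : (2 : ℝ) ^ t ≤ #G)
  obtain ⟨C, hCG, hC, htC⟩ := hT.exists_isTransitiveOn_of_two_pow_le (n := t - 1)
    ((Nat.pow_le_pow_right two_pos (t.sub_le 1)).trans hG)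
  rw [Nat.sub_add_cancel (by omega)] at hC
  exact hU (hT.containsU_of_cycle hA hC hB htA htC htB
    (fun a ha c hc => (mem_filter.1 (hCG hc)).2.1 a ha)
    (fun c hc b hb => (mem_filter.1 (hCG hc)).2.2 b hb) fun b hb a ha => (hedge a ha b hb).1)
end

section
/- For every α ∈ [0, 1/2] and every ε > 0, there exists a constant C₇ = C₇(α, ε) > 0 such that the following holds. Let T be a tournament with a fixed ordering of its vertices, and let I < J be two disjoint intervals of vertices with |I| + |J| = n such that the number of backward edges directed from J to I is L ≥ C₇·n^{2−α}. Then either (1) there exist partitions of I into two intervals I = I₁ ∪ I₂ with I₁ < I₂ and of J into two intervals J = J₁ ∪ J₂ with J₁ < J₂ such that the number of backward edges from J₁ to I₁ is at least εL and the number of backward edges from J₂ to I₂ is at least εL, or (2) there exist intervals I' ⊆ I and J' ⊆ J with |I'| + |J'| ≤ n/2 such that the number of backward edges from J' to I' is at least (1/2 − 3ε)L. -/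
/-- The number of backward edges from the interval of positions `[c, d]` to the interval
of positions `[a, b]`, for a tournament `T` on `Fin N` whose fixed vertex ordering is the
natural order on `Fin N`: pairs `x ∈ [a, b]`, `y ∈ [c, d]` with the edge directed from `y`
to `x`. -/
noncomputable def backBetween {N : ℕ} (T : Fin N → Fin N → Prop) (a b c d : ℕ) : ℕ :=
  ({p : Fin N × Fin N | a ≤ (p.1 : ℕ) ∧ (p.1 : ℕ) ≤ b ∧ c ≤ (p.2 : ℕ) ∧ (p.2 : ℕ) ≤ d ∧
      T p.2 p.1}).ncard

private lemma back_union_col {N : ℕ} (T : Fin N → Fin N → Prop) (a b c m d : ℕ)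
    (hcm : c ≤ m) (hmd : m ≤ d) :
    backBetween T a b c d = backBetween T a b c m + backBetween T a b (m+1) d := by
  unfold backBetween
  have hset : {p : Fin N × Fin N | a ≤ (p.1 : ℕ) ∧ (p.1 : ℕ) ≤ b ∧ c ≤ (p.2 : ℕ) ∧ (p.2 : ℕ) ≤ d ∧ T p.2 p.1}
      = {p : Fin N × Fin N | a ≤ (p.1 : ℕ) ∧ (p.1 : ℕ) ≤ b ∧ c ≤ (p.2 : ℕ) ∧ (p.2 : ℕ) ≤ m ∧ T p.2 p.1}
      ∪ {p : Fin N × Fin N | a ≤ (p.1 : ℕ) ∧ (p.1 : ℕ) ≤ b ∧ m+1 ≤ (p.2 : ℕ) ∧ (p.2 : ℕ) ≤ d ∧ T p.2 p.1} := by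
    ext p
    simp only [Set.mem_union, Set.mem_setOf_eq]
    constructor
    · rintro ⟨h1, h2, h3, h4, h5⟩
      by_cases h : (p.2 : ℕ) ≤ m
      · exact Or.inl ⟨h1, h2, h3, h, h5⟩
      · exact Or.inr ⟨h1, h2, by omega, h4, h5⟩
    · rintro (⟨h1, h2, h3, h4, h5⟩ | ⟨h1, h2, h3, h4, h5⟩)
      · exact ⟨h1, h2, h3, by omega, h5⟩
      · exact ⟨h1, h2, by omega, h4, h5⟩
  rw [hset, Set.ncard_union_eq ?_ (Set.toFinite _) (Set.toFinite _)]
  rw [Set.disjoint_left]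
  rintro p ⟨_, _, _, h4, _⟩ ⟨h3', _⟩
  omega

private lemma back_union_row {N : ℕ} (T : Fin N → Fin N → Prop) (a m b c d : ℕ)
    (ham : a ≤ m) (hmb : m ≤ b) :
    backBetween T a b c d = backBetween T a m c d + backBetween T (m+1) b c d := by
  unfold backBetween
  have hset : {p : Fin N × Fin N | a ≤ (p.1 : ℕ) ∧ (p.1 : ℕ) ≤ b ∧ c ≤ (p.2 : ℕ) ∧ (p.2 : ℕ) ≤ d ∧ T p.2 p.1}
      = {p : Fin N × Fin N | a ≤ (p.1 : ℕ) ∧ (p.1 : ℕ) ≤ m ∧ c ≤ (p.2 : ℕ) ∧ (p.2 : ℕ) ≤ d ∧ T p.2 p.1}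
      ∪ {p : Fin N × Fin N | m+1 ≤ (p.1 : ℕ) ∧ (p.1 : ℕ) ≤ b ∧ c ≤ (p.2 : ℕ) ∧ (p.2 : ℕ) ≤ d ∧ T p.2 p.1} := by
    ext p
    simp only [Set.mem_union, Set.mem_setOf_eq]
    constructor
    · rintro ⟨h1, h2, h3, h4, h5⟩
      by_cases h : (p.1 : ℕ) ≤ m
      · exact Or.inl ⟨h1, h, h3, h4, h5⟩
      · exact Or.inr ⟨by omega, h2, h3, h4, h5⟩
    · rintro (⟨h1, h2, h3, h4, h5⟩ | ⟨h1, h2, h3, h4, h5⟩)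
      · exact ⟨h1, by omega, h3, h4, h5⟩
      · exact ⟨by omega, h2, h3, h4, h5⟩
  rw [hset, Set.ncard_union_eq ?_ (Set.toFinite _) (Set.toFinite _)]
  rw [Set.disjoint_left]
  rintro p ⟨_, h2, _⟩ ⟨h1', _⟩
  omega

private lemma back_single_row_le {N : ℕ} (T : Fin N → Fin N → Prop) (a c d : ℕ) :
    backBetween T a a c d ≤ d + 1 - c := by
  unfold backBetween
  have h : ({p : Fin N × Fin N | a ≤ (p.1 : ℕ) ∧ (p.1 : ℕ) ≤ a ∧ c ≤ (p.2 : ℕ) ∧ (p.2 : ℕ) ≤ d ∧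
      T p.2 p.1}).ncard ≤ (Set.Icc c d).ncard :=
    Set.ncard_le_ncard_of_injOn (fun p : Fin N × Fin N => (p.2 : ℕ))
    (fun p hp => Set.mem_Icc.mpr ⟨hp.2.2.1, hp.2.2.2.1⟩)
    (fun p hp q hq hpq => by
      obtain ⟨hp1, hp2, -⟩ := hp
      obtain ⟨hq1, hq2, -⟩ := hq
      have h2 : p.2 = q.2 := Fin.ext hpq
      have h1 : p.1 = q.1 := Fin.ext (by omega)
      exact Prod.ext h1 h2)
    (Set.finite_Icc c d)
  calc _ ≤ (Set.Icc c d).ncard := h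
    _ = d + 1 - c := by
        rw [← Finset.coe_Icc, Set.ncard_coe_finset, Nat.card_Icc]

private lemma back_single_col_le {N : ℕ} (T : Fin N → Fin N → Prop) (a b c : ℕ) :
    backBetween T a b c c ≤ b + 1 - a := by
  unfold backBetween
  have h : ({p : Fin N × Fin N | a ≤ (p.1 : ℕ) ∧ (p.1 : ℕ) ≤ b ∧ c ≤ (p.2 : ℕ) ∧ (p.2 : ℕ) ≤ c ∧
      T p.2 p.1}).ncard ≤ (Set.Icc a b).ncard :=
    Set.ncard_le_ncard_of_injOn (fun p : Fin N × Fin N => (p.1 : ℕ))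
    (fun p hp => Set.mem_Icc.mpr ⟨hp.1, hp.2.1⟩)
    (fun p hp q hq hpq => by
      obtain ⟨-, -, hp1, hp2, -⟩ := hp
      obtain ⟨-, -, hq1, hq2, -⟩ := hq
      have h1 : p.1 = q.1 := Fin.ext hpq
      have h2 : p.2 = q.2 := Fin.ext (by omega)
      exact Prod.ext h1 h2)
    (Set.finite_Icc a b)
  calc _ ≤ (Set.Icc a b).ncard := h
    _ = b + 1 - a := by
        rw [← Finset.coe_Icc, Set.ncard_coe_finset, Nat.card_Icc]

/-- **Claim (density increment).** For every `α ∈ [0, 1/2]` and `ε > 0` there is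
`C₇ = C₇(α, ε) > 0` such that: for any tournament `T` with a fixed vertex ordering and
any two intervals `I = [a₁, b₁] < J = [a₂, b₂]` with `|I| + |J| = n` and at least
`L ≥ C₇·n^{2-α}` backward edges from `J` to `I`, either (1) `I` and `J` can each be
partitioned into two intervals `I = I₁ ∪ I₂`, `J = J₁ ∪ J₂` with at least `εL` backward
edges from `J₁` to `I₁` and at least `εL` from `J₂` to `I₂`, or (2) there are subintervals
`I' ⊆ I`, `J' ⊆ J` with `|I'| + |J'| ≤ n/2` and at least `(1/2 - 3ε)L` backward edges from
`J'` to `I'`. -/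
theorem statement14 (α : ℝ) (hα₀ : 0 ≤ α) (hα₁ : α ≤ 1 / 2) (ε : ℝ) (hε : 0 < ε) :
    ∃ C₇ : ℝ, 0 < C₇ ∧
      ∀ (N : ℕ) (T : Fin N → Fin N → Prop), IsTournament T →
        ∀ a₁ b₁ a₂ b₂ n L : ℕ,
          a₁ ≤ b₁ → b₁ < a₂ → a₂ ≤ b₂ → b₂ < N →
          (b₁ - a₁ + 1) + (b₂ - a₂ + 1) = n →
          L = backBetween T a₁ b₁ a₂ b₂ →
          C₇ * (n : ℝ) ^ ((2 : ℝ) - α) ≤ (L : ℝ) →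
          ((∃ c₁ c₂ : ℕ, a₁ ≤ c₁ ∧ c₁ < b₁ ∧ a₂ ≤ c₂ ∧ c₂ < b₂ ∧
              ε * (L : ℝ) ≤ (backBetween T a₁ c₁ a₂ c₂ : ℝ) ∧
              ε * (L : ℝ) ≤ (backBetween T (c₁ + 1) b₁ (c₂ + 1) b₂ : ℝ)) ∨
            (∃ a₁' b₁' a₂' b₂' : ℕ,
              a₁ ≤ a₁' ∧ a₁' ≤ b₁' ∧ b₁' ≤ b₁ ∧ a₂ ≤ a₂' ∧ a₂' ≤ b₂' ∧ b₂' ≤ b₂ ∧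
              (((b₁' - a₁' + 1) + (b₂' - a₂' + 1) : ℕ) : ℝ) ≤ (n : ℝ) / 2 ∧
              (1 / 2 - 3 * ε) * (L : ℝ) ≤ (backBetween T a₁' b₁' a₂' b₂' : ℝ))) := by
  classical
  refine ⟨1/ε + 8, by positivity, ?_⟩
  intro N T _hT a₁ b₁ a₂ b₂ n L h11 h12 h21 h22 hn hLdef hC
  -- basic numeric facts
  have hn2 : 2 ≤ n := by omega
  have hn1R : (1:ℝ) ≤ (n:ℝ) := by exact_mod_cast (by omega : 1 ≤ n)
  have hrp : (n:ℝ) ≤ (n:ℝ) ^ ((2:ℝ) - α) := by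
    nth_rewrite 1 [← Real.rpow_one (n:ℝ)]
    exact Real.rpow_le_rpow_of_exponent_le hn1R (by linarith)
  have hCpos : (0:ℝ) < 1/ε + 8 := by positivity
  have hCn : (1/ε + 8) * (n:ℝ) ≤ (L:ℝ) := le_trans (by nlinarith) hC
  have hεn : (n:ℝ) ≤ ε * (L:ℝ) := by
    have h1 : (1/ε) * (n:ℝ) ≤ (L:ℝ) := by nlinarith
    have := mul_le_mul_of_nonneg_left h1 (le_of_lt hε)
    rw [← mul_assoc, mul_one_div, div_self (ne_of_gt hε), one_mul] at this
    exact this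
  have h8n : 8 * (n:ℝ) ≤ (L:ℝ) := by
    nlinarith [mul_nonneg (by positivity : (0:ℝ) ≤ 1/ε) (by positivity : (0:ℝ) ≤ (n:ℝ))]
  have hnL : 2 * n + 1 ≤ L := by
    have : (2 * n + 1 : ℝ) ≤ (L:ℝ) := by linarith
    exact_mod_cast this
  -- row/column bounds
  have hrowJ : ∀ v : ℕ, backBetween T v v a₂ b₂ ≤ n := fun v =>
    le_trans (back_single_row_le T v a₂ b₂) (by omega)
  have hcolI : ∀ v : ℕ, backBetween T a₁ b₁ v v ≤ n := fun v =>
    le_trans (back_single_col_le T a₁ b₁ v) (by omega)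
  -- find minimal row split c₁
  have hex1 : ∃ k, L ≤ 2 * backBetween T a₁ (a₁ + k) a₂ b₂ :=
    ⟨b₁ - a₁, by rw [show a₁ + (b₁ - a₁) = b₁ by omega, ← hLdef]; omega⟩
  set k := Nat.find hex1 with hkdef
  set c₁ := a₁ + k with hc₁def
  have hAge : L ≤ 2 * backBetween T a₁ c₁ a₂ b₂ := Nat.find_spec hex1
  have hkle : k ≤ b₁ - a₁ :=
    Nat.find_min' hex1 (by rw [show a₁ + (b₁ - a₁) = b₁ by omega, ← hLdef]; omega)
  have hc₁b : c₁ ≤ b₁ := by omega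
  have hk1 : 1 ≤ k := by
    by_contra h
    have hk0 : k = 0 := by omega
    have : backBetween T a₁ c₁ a₂ b₂ ≤ n := by
      rw [hc₁def, hk0, Nat.add_zero]; exact hrowJ a₁
    omega
  have hAub : 2 * backBetween T a₁ c₁ a₂ b₂ + 1 ≤ L + 2 * n := by
    have hmin : ¬ (L ≤ 2 * backBetween T a₁ (a₁ + (k-1)) a₂ b₂) :=
      Nat.find_min hex1 (by omega)
    have hstep : backBetween T a₁ c₁ a₂ b₂
        = backBetween T a₁ (a₁+(k-1)) a₂ b₂ + backBetween T c₁ c₁ a₂ b₂ := by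
      have h := back_union_row T a₁ (a₁+(k-1)) (a₁+(k-1)+1) a₂ b₂ (by omega) (by omega)
      rw [show a₁+(k-1)+1 = c₁ by omega] at h
      exact h
    have := hrowJ c₁
    omega
  have hc₁lt : c₁ < b₁ := by
    rcases lt_or_eq_of_le hc₁b with h | h
    · exact h
    · rw [h, ← hLdef] at hAub; omega
  -- find minimal column split c₂
  have hex2 : ∃ k, L ≤ 2 * backBetween T a₁ b₁ a₂ (a₂ + k) :=
    ⟨b₂ - a₂, by rw [show a₂ + (b₂ - a₂) = b₂ by omega, ← hLdef]; omega⟩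
  set m := Nat.find hex2 with hmdef
  set c₂ := a₂ + m with hc₂def
  have hBge : L ≤ 2 * backBetween T a₁ b₁ a₂ c₂ := Nat.find_spec hex2
  have hmle : m ≤ b₂ - a₂ :=
    Nat.find_min' hex2 (by rw [show a₂ + (b₂ - a₂) = b₂ by omega, ← hLdef]; omega)
  have hc₂b : c₂ ≤ b₂ := by omega
  have hm1 : 1 ≤ m := by
    by_contra h
    have hm0 : m = 0 := by omega
    have : backBetween T a₁ b₁ a₂ c₂ ≤ n := by
      rw [hc₂def, hm0, Nat.add_zero]; exact hcolI a₂
    omega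
  have hBub : 2 * backBetween T a₁ b₁ a₂ c₂ + 1 ≤ L + 2 * n := by
    have hmin : ¬ (L ≤ 2 * backBetween T a₁ b₁ a₂ (a₂ + (m-1))) :=
      Nat.find_min hex2 (by omega)
    have hstep : backBetween T a₁ b₁ a₂ c₂
        = backBetween T a₁ b₁ a₂ (a₂+(m-1)) + backBetween T a₁ b₁ c₂ c₂ := by
      have h := back_union_col T a₁ b₁ a₂ (a₂+(m-1)) (a₂+(m-1)+1) (by omega) (by omega)
      rw [show a₂+(m-1)+1 = c₂ by omega] at h
      exact h
    have := hcolI c₂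
    omega
  have hc₂lt : c₂ < b₂ := by
    rcases lt_or_eq_of_le hc₂b with h | h
    · exact h
    · rw [h, ← hLdef] at hBub; omega
  -- quadrant identities
  have hAq : backBetween T a₁ c₁ a₂ b₂
      = backBetween T a₁ c₁ a₂ c₂ + backBetween T a₁ c₁ (c₂+1) b₂ :=
    back_union_col T a₁ c₁ a₂ c₂ b₂ (by omega) hc₂b
  have hBq : backBetween T a₁ b₁ a₂ c₂
      = backBetween T a₁ c₁ a₂ c₂ + backBetween T (c₁+1) b₁ a₂ c₂ :=
    back_union_row T a₁ c₁ b₁ a₂ c₂ (by omega) hc₁b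
  have hLq1 : backBetween T a₁ b₁ a₂ b₂
      = backBetween T a₁ c₁ a₂ b₂ + backBetween T (c₁+1) b₁ a₂ b₂ :=
    back_union_row T a₁ c₁ b₁ a₂ b₂ (by omega) hc₁b
  have hLq2 : backBetween T (c₁+1) b₁ a₂ b₂
      = backBetween T (c₁+1) b₁ a₂ c₂ + backBetween T (c₁+1) b₁ (c₂+1) b₂ :=
    back_union_col T (c₁+1) b₁ a₂ c₂ b₂ (by omega) hc₂b
  set Q11 := backBetween T a₁ c₁ a₂ c₂ with hQ11
  set Q12 := backBetween T a₁ c₁ (c₂+1) b₂ with hQ12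
  set Q21 := backBetween T (c₁+1) b₁ a₂ c₂ with hQ21
  set Q22 := backBetween T (c₁+1) b₁ (c₂+1) b₂ with hQ22
  set A := backBetween T a₁ c₁ a₂ b₂ with hA
  set B := backBetween T a₁ b₁ a₂ c₂ with hB
  have hLsum : L = Q11 + Q12 + Q21 + Q22 := by omega
  -- real versions
  have rA1 : (L:ℝ) ≤ 2 * A := by exact_mod_cast hAge
  have rA2 : 2 * (A:ℝ) + 1 ≤ L + 2*n := by exact_mod_cast hAub
  have rB1 : (L:ℝ) ≤ 2 * B := by exact_mod_cast hBge
  have rB2 : 2 * (B:ℝ) + 1 ≤ L + 2*n := by exact_mod_cast hBub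
  have rAq : (A:ℝ) = Q11 + Q12 := by exact_mod_cast hAq
  have rBq : (B:ℝ) = Q11 + Q21 := by exact_mod_cast hBq
  have rLsum : (L:ℝ) = Q11 + Q12 + Q21 + Q22 := by exact_mod_cast hLsum
  by_cases hcase : ε * (L:ℝ) + 2*n ≤ (Q11:ℝ)
  · -- option (1)
    left
    refine ⟨c₁, c₂, by omega, hc₁lt, by omega, hc₂lt, ?_, ?_⟩
    · have : (0:ℝ) ≤ 2*n := by positivity
      linarith
    · -- ε L ≤ Q22
      linarith
  · -- option (2)
    right
    push_neg at hcase
    have hQ12lb : (1/2 - 3*ε) * (L:ℝ) ≤ (Q12:ℝ) := by linarith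
    have hQ21lb : (1/2 - 3*ε) * (L:ℝ) ≤ (Q21:ℝ) := by linarith
    by_cases hs : 2 * ((c₁ - a₁ + 1) + (b₂ - (c₂+1) + 1)) ≤ n
    · refine ⟨a₁, c₁, c₂+1, b₂, le_refl _, by omega, by omega, by omega, by omega,
        le_refl _, ?_, hQ12lb⟩
      have : ((2 * ((c₁ - a₁ + 1) + (b₂ - (c₂+1) + 1)) : ℕ) : ℝ) ≤ (n:ℝ) := by
        exact_mod_cast hs
      push_cast at this ⊢
      linarith
    · have hs2 : 2 * ((b₁ - (c₁+1) + 1) + (c₂ - a₂ + 1)) ≤ n := by omega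
      refine ⟨c₁+1, b₁, a₂, c₂, by omega, by omega, le_refl _, le_refl _, by omega,
        by omega, ?_, hQ21lb⟩
      have : ((2 * ((b₁ - (c₁+1) + 1) + (c₂ - a₂ + 1)) : ℕ) : ℝ) ≤ (n:ℝ) := by
        exact_mod_cast hs2
      push_cast at this ⊢
      linarith
end

section
/- For every n ≥ 4, the two-colouring of the edges of the complete graph K_n in which all edges incident to one fixed vertex are coloured red and all remaining edges are coloured blue contains no unavoidable 2-colouring (i.e., no four vertices induce an unavoidable 2-colouring), and each of the two colours appears on at least n − 1 edges. -/
/-- **Claim (lower bound for `𝒞(2, δ)`).** For `n ≥ 4`, the colouring of `K_n` in which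
exactly the edges incident to a fixed vertex `v` are red contains no unavoidable
`2`-colouring, and each colour appears on at least `n - 1` edges. -/
theorem statement15 (n : ℕ) (hn : 4 ≤ n) (v : Fin n) :
    ¬ ContainsUnavoidable (SimpleGraph.fromRel (fun x _ : Fin n => x = v)) 2 ∧
    n - 1 ≤ (SimpleGraph.fromRel (fun x _ : Fin n => x = v)).edgeSet.ncard ∧
    n - 1 ≤ (SimpleGraph.fromRel (fun x _ : Fin n => x = v))ᶜ.edgeSet.ncard := by
  set R := SimpleGraph.fromRel (fun x _ : Fin n => x = v) with hR
  have hadj : ∀ x y : Fin n, R.Adj x y ↔ x ≠ y ∧ (x = v ∨ y = v) := by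
    intro x y; simp [hR, SimpleGraph.fromRel_adj]
  have hcadj : ∀ x y : Fin n, Rᶜ.Adj x y ↔ x ≠ y ∧ x ≠ v ∧ y ≠ v := by
    intro x y
    simp only [SimpleGraph.compl_adj, hadj]
    constructor
    · rintro ⟨hxy, h⟩
      refine ⟨hxy, ?_, ?_⟩ <;> [rintro rfl; rintro rfl] <;> exact h ⟨hxy, by simp⟩
    · rintro ⟨hxy, hx, hy⟩
      exact ⟨hxy, fun h => by rcases h.2 with rfl | rfl <;> simp_all⟩
  -- generic ncard bound
  have key : ∀ (E : Set (Sym2 (Fin n))) (f : Fin n → Sym2 (Fin n)),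
      Set.InjOn f {w | w ≠ v} → (∀ w, w ≠ v → f w ∈ E) → n - 1 ≤ E.ncard := by
    intro E f hinj hmem
    have h1 : {w : Fin n | w ≠ v}.ncard = n - 1 := by
      have : {w : Fin n | w ≠ v} = ({v} : Set (Fin n))ᶜ := by ext; simp [ne_comm]
      rw [this, Set.ncard_eq_toFinset_card', Set.toFinset_compl]
      simp [Finset.card_compl]
    calc n - 1 = (f '' {w | w ≠ v}).ncard := by rw [Set.ncard_image_of_injOn hinj, h1]
      _ ≤ E.ncard := Set.ncard_le_ncard (by rintro e ⟨w, hw, rfl⟩; exact hmem w hw)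
        (Set.toFinite E)
  refine ⟨?_, ?_, ?_⟩
  · rintro ⟨X, Y, hXY, hX2, hY2, G, hG, hXcl, -, hcross⟩
    obtain ⟨x1, x2, hx12, rfl⟩ := Finset.card_eq_two.mp hX2
    obtain ⟨y1, y2, hy12, rfl⟩ := Finset.card_eq_two.mp hY2
    have hax : G.Adj x1 x2 := hXcl (by simp) (by simp) hx12
    rcases hG with rfl | rfl
    · -- G = R : some xi = v, but cross edges at v must be blue — impossible
      have hcr : ∀ y ∈ ({y1, y2} : Finset (Fin n)), ∀ x ∈ ({x1, x2} : Finset (Fin n)),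
          Rᶜ.Adj x y := fun y hy x hx => hcross x hx y hy
      rcases (hadj x1 x2).mp hax with ⟨-, rfl | rfl⟩
      · exact ((hcadj _ _).mp (hcr y1 (by simp) x1 (by simp))).2.1 rfl
      · exact ((hcadj _ _).mp (hcr y1 (by simp) x2 (by simp))).2.1 rfl
    · -- G = Rᶜ : x1 ≠ v, cross edges red force y1 = v and y2 = v
      have hx1v : x1 ≠ v := ((hcadj _ _).mp hax).2.1
      have h1 : R.Adj x1 y1 := by
        have := hcross x1 (by simp) y1 (by simp); rwa [compl_compl] at this
      have h2 : R.Adj x1 y2 := by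
        have := hcross x1 (by simp) y2 (by simp); rwa [compl_compl] at this
      rcases ((hadj _ _).mp h1).2 with rfl | rfl
      · exact hx1v rfl
      rcases ((hadj _ _).mp h2).2 with rfl | h
      · exact hx1v rfl
      · exact hy12 h.symm
  · -- star has n-1 edges
    refine key _ (fun w => s(v, w)) ?_ ?_
    · intro a ha b hb h
      rw [Sym2.eq_iff] at h
      rcases h with ⟨-, h⟩ | ⟨h1, h2⟩
      · exact h
      · exact absurd h2 ha
    · intro w hw
      rw [SimpleGraph.mem_edgeSet, hadj]
      exact ⟨fun h => hw h.symm, Or.inl rfl⟩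
  · -- complement: pick three distinct vertices ≠ v
    have h3 : 2 < (({v} : Finset (Fin n))ᶜ).card := by
      rw [Finset.card_compl]; simp; omega
    obtain ⟨a, b, c, ha, hb, hc, hab, hac, hbc⟩ := Finset.two_lt_card_iff.mp h3
    simp only [Finset.mem_compl, Finset.mem_singleton] at ha hb hc
    refine key _ (fun w => if w = a then s(b, c) else s(a, w)) ?_ ?_
    · intro x hx y hy h
      simp only at h
      split_ifs at h with h1 h2 h2
      · exact h1.trans h2.symm
      · rw [Sym2.eq_iff] at h
        rcases h with ⟨h3, h4⟩ | ⟨h3, h4⟩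
        · exact absurd h3.symm hab
        · exact absurd h4.symm hac
      · rw [Sym2.eq_iff] at h
        rcases h with ⟨h3, h4⟩ | ⟨h3, h4⟩
        · exact absurd h3 hab
        · exact absurd h3 hac
      · rw [Sym2.eq_iff] at h
        rcases h with ⟨-, h4⟩ | ⟨h3, h4⟩
        · exact h4
        · exact absurd h4 h1
    · intro w hw
      by_cases h1 : w = a <;> simp only [h1, if_true, if_false, if_pos, if_neg]
      · rw [SimpleGraph.mem_edgeSet, hcadj]; exact ⟨hbc, hb, hc⟩
      · rw [SimpleGraph.mem_edgeSet, hcadj]; exact ⟨fun h => h1 h.symm, ha, hw⟩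
end
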